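/- arXiv:1906.03409 — 8 statements merged into one kernel-verified Lean document; each statement's English description precedes it below -/
import Mathlib

section
/- Let {S(t)}_{t≥0} be a twin semigroup on a norming dual pair (Y,Y⋄) with constants M ≥ 1, ω ∈ ℝ and Laplace transform S̄(λ) for λ > ω. For y, z ∈ Y the following are equivalent: (1) there exists λ > ω such that y = S̄(λ)(λ·y − z); (2) for every t > 0 and every y⋄ ∈ Y⋄ one has ∫₀ᵗ y⋄S(τ)z dτ = y⋄S(t)y − ⟨y⋄, y⟩. In particular, if (1) holds for one λ > ω then it holds for every λ > ω. -/
open MeasureTheory Filter Topology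

/-- A norming dual pair of real Banach spaces: a bounded bilinear pairing such that
each space norms the other. -/
structure NormingDualPair (Y Yd : Type*) [NormedAddCommGroup Y] [NormedSpace ℝ Y]
    [CompleteSpace Y] [NormedAddCommGroup Yd] [NormedSpace ℝ Yd] [CompleteSpace Yd] where
  pair : Yd →ₗ[ℝ] Y →ₗ[ℝ] ℝ
  M : ℝ
  one_le_M : 1 ≤ M
  pair_bound : ∀ (yd : Yd) (y : Y), |pair yd y| ≤ M * ‖yd‖ * ‖y‖
  norm_eq : ∀ y : Y, ‖y‖ = sSup {r : ℝ | ∃ yd : Yd, ‖yd‖ ≤ 1 ∧ r = |pair yd y|}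
  norm_eq' : ∀ yd : Yd, ‖yd‖ = sSup {r : ℝ | ∃ y : Y, ‖y‖ ≤ 1 ∧ r = |pair yd y|}

/-- A twin semigroup on a norming dual pair `(Y, Yd)`: a semigroup of twin operators,
exponentially bounded, with weakly measurable orbits, whose Laplace transform (for
`λ > omega`) is again a twin operator. -/
structure TwinSemigroup (Y Yd : Type*) [NormedAddCommGroup Y] [NormedSpace ℝ Y]
    [CompleteSpace Y] [NormedAddCommGroup Yd] [NormedSpace ℝ Yd] [CompleteSpace Yd]
    (P : NormingDualPair Y Yd) where
  /-- the action of `S(t)` on `Y` -/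
  S : ℝ → Y →ₗ[ℝ] Y
  /-- the action of `S(t)` on `Yd` -/
  Sd : ℝ → Yd →ₗ[ℝ] Yd
  compat : ∀ t : ℝ, 0 ≤ t → ∀ (yd : Yd) (y : Y), P.pair (Sd t yd) y = P.pair yd (S t y)
  S_zero : S 0 = LinearMap.id
  S_add : ∀ t s : ℝ, 0 ≤ t → 0 ≤ s → ∀ y : Y, S (t + s) y = S t (S s y)
  M : ℝ
  omega : ℝ
  one_le_M : 1 ≤ M
  bound : ∀ t : ℝ, 0 ≤ t → ∀ (yd : Yd) (y : Y),
    |P.pair yd (S t y)| ≤ M * Real.exp (omega * t) * ‖y‖ * ‖yd‖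
  meas : ∀ (yd : Yd) (y : Y), Measurable fun t : ℝ => P.pair yd (S t y)
  /-- the action of the Laplace transform `S̄(λ)` on `Y` -/
  lap : ℝ → Y →ₗ[ℝ] Y
  /-- the action of the Laplace transform `S̄(λ)` on `Yd` -/
  lapd : ℝ → Yd →ₗ[ℝ] Yd
  lap_compat : ∀ l : ℝ, omega < l → ∀ (yd : Yd) (y : Y),
    P.pair (lapd l yd) y = P.pair yd (lap l y)
  lap_eq : ∀ l : ℝ, omega < l → ∀ (yd : Yd) (y : Y),
    P.pair yd (lap l y) = ∫ t in Set.Ioi (0:ℝ), Real.exp (-l * t) * P.pair yd (S t y)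

/-! Both directions are integration by parts against an absolutely continuous primitive.
If `y = S̄(λ)(λy - z)`, the semigroup law gives
`⟨y⋄, S(τ)y⟩ = e^{λτ} (⟨y⋄, y⟩ - ∫₀^τ e^{-λu} ⟨y⋄, S(u)(λy - z)⟩ du)`, whose derivative is
`⟨y⋄, S(τ)z⟩` almost everywhere. Conversely, if `⟨y⋄, S(τ)y⟩ = ⟨y⋄, y⟩ + ∫₀^τ ⟨y⋄, S(u)z⟩ du`,
integrating `e^{-λτ}` against it by parts on `[0, t]` and letting `t → ∞` gives
`⟨y⋄, S̄(λ)(λy - z)⟩ = ⟨y⋄, y⟩` for every `λ > ω`; since `Y⋄` norms `Y`, this is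
`y = S̄(λ)(λy - z)`. -/

open Set

theorem integral_deriv_mul_primitive_eq_sub {c c' f : ℝ → ℝ} {a b : ℝ} (C : ℝ)
    (hc : ∀ x, HasDerivAt c (c' x) x) (hc' : Continuous c')
    (hf : IntervalIntegrable f volume a b) :
    ∫ x in a..b, (c' x * (C + ∫ u in a..x, f u) + c x * f x)
      = c b * (C + ∫ u in a..b, f u) - c a * C := by
  have hc_deriv : deriv c = c' := funext fun x => (hc x).deriv
  have hc_ac : AbsolutelyContinuousOnInterval c a b :=
    (contDiff_one_iff_deriv.2 ⟨fun x => (hc x).differentiableAt, hc_deriv ▸ hc'⟩).contDiffOn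
      |>.absolutelyContinuousOnInterval
  have hF_ac : AbsolutelyContinuousOnInterval (fun x => C + ∫ u in a..x, f u) a b :=
    contDiff_const.contDiffOn.absolutelyContinuousOnInterval.add
      (hf.absolutelyContinuousOnInterval_intervalIntegral left_mem_uIcc)
  have h := hc_ac.integral_deriv_mul_eq_sub hF_ac
  simp only [intervalIntegral.integral_same, add_zero] at h
  rw [← h]
  refine intervalIntegral.integral_congr_ae ?_
  filter_upwards [hf.ae_hasDerivAt_integral] with x hx hxab
  rw [hc_deriv, ((hx (uIoc_subset_uIcc hxab) a left_mem_uIcc).const_add C).deriv]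

theorem hasDerivAt_exp_const_mul (l x : ℝ) :
    HasDerivAt (fun x => Real.exp (l * x)) (l * Real.exp (l * x)) x := by
  simpa [mul_comm] using ((hasDerivAt_id x).const_mul l).exp

section

variable {Y Yd : Type*} [NormedAddCommGroup Y] [NormedSpace ℝ Y] [CompleteSpace Y]
    [NormedAddCommGroup Yd] [NormedSpace ℝ Yd] [CompleteSpace Yd]

theorem NormingDualPair.eq_of_forall_pair_eq (P : NormingDualPair Y Yd) {a b : Y}
    (h : ∀ yd, P.pair yd a = P.pair yd b) : a = b := by
  have hset : {r : ℝ | ∃ yd : Yd, ‖yd‖ ≤ 1 ∧ r = |P.pair yd (a - b)|} = {0} := by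
    ext r
    simp only [map_sub, h, sub_self, abs_zero, mem_ofPred_eq, mem_singleton_iff]
    exact ⟨fun ⟨_, _, hr⟩ => hr, fun hr => ⟨0, by simp, hr⟩⟩
  rw [← sub_eq_zero, ← norm_eq_zero, P.norm_eq, hset, csSup_singleton]

namespace TwinSemigroup

variable {P : NormingDualPair Y Yd} (T : TwinSemigroup Y Yd P)

theorem intervalIntegrable_pair (yd : Yd) (x : Y) {t : ℝ} (ht : 0 ≤ t) :
    IntervalIntegrable (fun τ => P.pair yd (T.S τ x)) volume 0 t := by
  rw [intervalIntegrable_iff_integrableOn_Ioc_of_le ht]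
  refine Measure.integrableOn_of_bounded (M := T.M * Real.exp (|T.omega| * t) * ‖x‖ * ‖yd‖)
    measure_Ioc_lt_top.ne (T.meas yd x).aestronglyMeasurable ?_
  refine (ae_restrict_iff' measurableSet_Ioc).2 (ae_of_all _ fun τ hτ => ?_)
  have hωτ : T.omega * τ ≤ |T.omega| * t :=
    (mul_le_mul_of_nonneg_right (le_abs_self _) hτ.1.le).trans
      (mul_le_mul_of_nonneg_left hτ.2 (abs_nonneg _))
  have hM : 0 ≤ T.M := zero_le_one.trans T.one_le_M
  rw [Real.norm_eq_abs]
  refine (T.bound τ hτ.1.le yd x).trans ?_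
  gcongr

theorem abs_exp_mul_pair_le (l : ℝ) (yd : Yd) (x : Y) {t : ℝ} (ht : 0 ≤ t) :
    |Real.exp (-l * t) * P.pair yd (T.S t x)|
      ≤ T.M * ‖x‖ * ‖yd‖ * Real.exp (-(l - T.omega) * t) := by
  rw [abs_mul, Real.abs_exp]
  calc Real.exp (-l * t) * |P.pair yd (T.S t x)|
      ≤ Real.exp (-l * t) * (T.M * Real.exp (T.omega * t) * ‖x‖ * ‖yd‖) := by
        gcongr
        exact T.bound t ht yd x
    _ = T.M * ‖x‖ * ‖yd‖ * Real.exp (-(l - T.omega) * t) := by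
        rw [show -(l - T.omega) * t = -l * t + T.omega * t by ring, Real.exp_add]
        ring

theorem integrableOn_exp_mul_pair_Ioi {l : ℝ} (hl : T.omega < l) (yd : Yd) (x : Y) :
    IntegrableOn (fun τ => Real.exp (-l * τ) * P.pair yd (T.S τ x)) (Ioi 0) := by
  refine Integrable.mono'
    ((exp_neg_integrableOn_Ioi 0 (sub_pos.2 hl)).const_mul (T.M * ‖x‖ * ‖yd‖))
    ((by fun_prop : Measurable fun τ => Real.exp (-l * τ)).mul (T.meas yd x)).aestronglyMeasurable
    ((ae_restrict_iff' measurableSet_Ioi).2 (ae_of_all _ fun τ hτ => ?_))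
  exact T.abs_exp_mul_pair_le l yd x (le_of_lt hτ)

theorem tendsto_exp_mul_pair_atTop {l : ℝ} (hl : T.omega < l) (yd : Yd) (x : Y) :
    Tendsto (fun t => Real.exp (-l * t) * P.pair yd (T.S t x)) atTop (𝓝 0) := by
  have hdecay :
      Tendsto (fun t => T.M * ‖x‖ * ‖yd‖ * Real.exp (-(l - T.omega) * t)) atTop (𝓝 0) := by
    simpa using ((Real.tendsto_exp_atBot.comp (tendsto_id.const_mul_atTop_of_neg
      (by linarith : -(l - T.omega) < 0))).const_mul (T.M * ‖x‖ * ‖yd‖))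
  refine squeeze_zero_norm' ?_ hdecay
  filter_upwards [eventually_ge_atTop 0] with t ht
  exact T.abs_exp_mul_pair_le l yd x ht

theorem pair_S_lap {l : ℝ} (hl : T.omega < l) (yd : Yd) (x : Y) {t : ℝ} (ht : 0 ≤ t) :
    P.pair yd (T.S t (T.lap l x)) = Real.exp (l * t) *
      (P.pair yd (T.lap l x) - ∫ u in 0..t, Real.exp (-l * u) * P.pair yd (T.S u x)) := by
  have hint := T.integrableOn_exp_mul_pair_Ioi hl yd x
  have htail : ∫ u in Ioi t, Real.exp (-l * u) * P.pair yd (T.S u x)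
      = Real.exp (-l * t) * P.pair yd (T.S t (T.lap l x)) := by
    rw [← T.compat t ht, T.lap_eq l hl, ← integral_const_mul,
      ← (measurePreserving_add_right volume t).setIntegral_preimage_emb
        (measurableEmbedding_addRight t), preimage_add_const_Ioi, sub_self]
    refine setIntegral_congr_fun measurableSet_Ioi fun s hs => ?_
    rw [T.compat t ht, ← T.S_add t s ht (le_of_lt hs), add_comm s t, mul_add, neg_mul,
      Real.exp_add]
    ring
  have hsplit := intervalIntegral.integral_interval_add_Ioi hint
    (hint.mono_set (Ioi_subset_Ioi ht))
  rw [htail, ← T.lap_eq l hl] at hsplit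
  rw [← hsplit, add_sub_cancel_left, ← mul_assoc, ← Real.exp_add, neg_mul, add_neg_cancel,
    Real.exp_zero, one_mul]

theorem integral_pair_S_eq_of_eq_lap {l : ℝ} (hl : T.omega < l) {y z : Y}
    (hy : y = T.lap l (l • y - z)) {t : ℝ} (ht : 0 ≤ t) (yd : Yd) :
    ∫ τ in 0..t, P.pair yd (T.S τ z) = P.pair yd (T.S t y) - P.pair yd y := by
  set x := l • y - z with hx
  set g : ℝ → ℝ := fun u => Real.exp (-l * u) * P.pair yd (T.S u x)
  have horbit : ∀ τ, 0 ≤ τ → P.pair yd (T.S τ y)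
      = -Real.exp (l * τ) * (-P.pair yd y + ∫ u in 0..τ, g u) := by
    intro τ hτ
    rw [hy, T.pair_S_lap hl yd x hτ]
    ring
  have hz : ∀ τ, P.pair yd (T.S τ z) = l * P.pair yd (T.S τ y) - P.pair yd (T.S τ x) := by
    intro τ
    simp [hx]
  have hexp : ∀ τ, Real.exp (l * τ) * Real.exp (-l * τ) = 1 := fun τ => by
    rw [← Real.exp_add, neg_mul, add_neg_cancel, Real.exp_zero]
  calc ∫ τ in 0..t, P.pair yd (T.S τ z)
      = ∫ τ in 0..t, (-(l * Real.exp (l * τ)) * (-P.pair yd y + ∫ u in 0..τ, g u)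
          + -Real.exp (l * τ) * g τ) := by
        refine intervalIntegral.integral_congr fun τ hτ => ?_
        rw [uIcc_of_le ht] at hτ
        rw [hz, horbit τ hτ.1]
        linear_combination (P.pair yd (T.S τ x)) * hexp τ
    _ = -Real.exp (l * t) * (-P.pair yd y + ∫ u in 0..t, g u)
          - -Real.exp (l * 0) * -P.pair yd y :=
        integral_deriv_mul_primitive_eq_sub _ (fun τ => (hasDerivAt_exp_const_mul l τ).neg)
          (by fun_prop) ((T.intervalIntegrable_pair yd x ht).continuousOn_mul (by fun_prop))
    _ = P.pair yd (T.S t y) - P.pair yd y := by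
        rw [horbit t ht]
        simp

theorem eq_lap_of_integral_pair_S_eq {y z : Y}
    (H : ∀ t : ℝ, 0 < t → ∀ yd : Yd,
      ∫ τ in 0..t, P.pair yd (T.S τ z) = P.pair yd (T.S t y) - P.pair yd y)
    {l : ℝ} (hl : T.omega < l) : y = T.lap l (l • y - z) := by
  refine P.eq_of_forall_pair_eq fun yd => ?_
  set x := l • y - z with hx
  have hprimitive : ∀ τ, 0 ≤ τ → P.pair yd (T.S τ y)
      = P.pair yd y + ∫ u in 0..τ, P.pair yd (T.S u z) := by
    intro τ hτ
    rcases hτ.eq_or_lt with rfl | hτ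
    · simp [T.S_zero]
    · rw [H τ hτ yd]
      ring
  have hx_pair : ∀ τ, P.pair yd (T.S τ x) = l * P.pair yd (T.S τ y) - P.pair yd (T.S τ z) := by
    intro τ
    simp [hx]
  have hpartial : ∀ t, 0 ≤ t → ∫ τ in 0..t, Real.exp (-l * τ) * P.pair yd (T.S τ x)
      = P.pair yd y - Real.exp (-l * t) * P.pair yd (T.S t y) := by
    intro t ht
    calc ∫ τ in 0..t, Real.exp (-l * τ) * P.pair yd (T.S τ x)
        = -∫ τ in 0..t, ((-l * Real.exp (-l * τ)) *
            (P.pair yd y + ∫ u in 0..τ, P.pair yd (T.S u z))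
            + Real.exp (-l * τ) * P.pair yd (T.S τ z)) := by
          rw [← intervalIntegral.integral_neg]
          refine intervalIntegral.integral_congr fun τ hτ => ?_
          rw [uIcc_of_le ht] at hτ
          simp only [hx_pair, ← hprimitive τ hτ.1]
          ring
      _ = -(Real.exp (-l * t) * (P.pair yd y + ∫ u in 0..t, P.pair yd (T.S u z))
            - Real.exp (-l * 0) * P.pair yd y) := by
          rw [integral_deriv_mul_primitive_eq_sub _ (hasDerivAt_exp_const_mul (-l)) (by fun_prop)
            (T.intervalIntegrable_pair yd z ht)]
      _ = P.pair yd y - Real.exp (-l * t) * P.pair yd (T.S t y) := by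
          rw [hprimitive t ht]
          simp
  have hlim : Tendsto (fun t => ∫ τ in 0..t, Real.exp (-l * τ) * P.pair yd (T.S τ x)) atTop
      (𝓝 (P.pair yd y)) := by
    have hdecay := (tendsto_const_nhds (x := P.pair yd y)).sub
      (T.tendsto_exp_mul_pair_atTop hl yd y)
    rw [sub_zero] at hdecay
    refine hdecay.congr' ?_
    filter_upwards [eventually_ge_atTop 0] with t ht
    exact (hpartial t ht).symm
  rw [T.lap_eq l hl]
  exact tendsto_nhds_unique hlim
    (intervalIntegral_tendsto_integral_Ioi 0 (T.integrableOn_exp_mul_pair_Ioi hl yd x) tendsto_id)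

end TwinSemigroup

end

/-- Lemma 2.2 of Diekmann–Verduyn Lunel: characterization of the generator of a twin
semigroup.  For `y z : Y`, `y ∈ D(C)` with `z ∈ Cy` (i.e. `y = S̄(λ)(λy − z)` for some
`λ > ω`) iff `∫₀ᵗ y⋄S(τ)z dτ = y⋄S(t)y − ⟨y⋄,y⟩` for all `t > 0` and all `y⋄`;
moreover if the resolvent identity holds for one `λ > ω` it holds for all `λ > ω`. -/
theorem twin_generator_characterization
    {Y Yd : Type*} [NormedAddCommGroup Y] [NormedSpace ℝ Y] [CompleteSpace Y]
    [NormedAddCommGroup Yd] [NormedSpace ℝ Yd] [CompleteSpace Yd]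
    (P : NormingDualPair Y Yd) (T : TwinSemigroup Y Yd P) (y z : Y) :
    ((∃ l : ℝ, T.omega < l ∧ y = T.lap l (l • y - z)) ↔
      (∀ t : ℝ, 0 < t → ∀ yd : Yd,
        (∫ τ in (0:ℝ)..t, P.pair yd (T.S τ z)) = P.pair yd (T.S t y) - P.pair yd y))
    ∧ ((∃ l : ℝ, T.omega < l ∧ y = T.lap l (l • y - z)) →
        ∀ l : ℝ, T.omega < l → y = T.lap l (l • y - z)) :=
  ⟨⟨fun ⟨_, hl, hy⟩ _ ht => T.integral_pair_S_eq_of_eq_lap hl hy ht.le,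
      fun H => ⟨T.omega + 1, lt_add_one _, T.eq_lap_of_integral_pair_S_eq H (lt_add_one _)⟩⟩,
    fun ⟨_, hl, hy⟩ _ hl' =>
      T.eq_lap_of_integral_pair_S_eq (fun _ ht => T.integral_pair_S_eq_of_eq_lap hl hy ht.le) hl'⟩
end

section
/- Let {S(t)}_{t≥0} be a twin semigroup on a norming dual pair (Y,Y⋄) with constants M ≥ 1, ω ∈ ℝ and Laplace transform S̄(λ) for λ > ω. Then for every t > 0 and y ∈ Y there exists an element w ∈ Y (denoted ∫₀ᵗ S(τ)y dτ) such that ⟨y⋄, w⟩ = ∫₀ᵗ y⋄S(τ)y dτ for all y⋄ ∈ Y⋄; moreover w belongs to the domain of the generator C with S(t)y − y ∈ Cw, i.e. w = S̄(λ)(λ·w − (S(t)y − y)) for every λ > ω. -/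
open MeasureTheory Filter Topology

/-!
Write `f u = ⟨y⋄, S(u) y⟩`. Weakly, `S̄(λ) S(a) y` is `e^{λa} ∫_a^∞ e^{-λu} f u du`, so
`S̄(λ) S(a) y - e^{-λh} S̄(λ) S(a+h) y` represents `∫_a^{a+h} e^{-λ(u-a)} f u du`. Summing over a
partition of `[0, t]` of mesh `h` gives elements of `Y` that represent `∫_0^t f` up to an error
`O(h) ‖y⋄‖`; as `Y⋄` norms `Y`, they form a Cauchy sequence, whose limit `w` represents `∫_0^t f`.

Since `S̄(λ)` is a twin operator, `⟨y⋄, S̄(λ) w⟩ = ∫_0^t ⟨y⋄, S̄(λ) S(σ) y⟩ dσ`, and integrating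
`λ e^{λσ}` by parts against the absolutely continuous tail `σ ↦ ∫_σ^∞ e^{-λu} f u du` turns
`λ ⟨y⋄, S̄(λ) w⟩ - ⟨y⋄, S̄(λ) (S(t) y - y)⟩` into `∫_0^t f = ⟨y⋄, w⟩`.
-/

namespace NormingDualPair

variable {Y Yd : Type*} [NormedAddCommGroup Y] [NormedSpace ℝ Y] [CompleteSpace Y]
  [NormedAddCommGroup Yd] [NormedSpace ℝ Yd] [CompleteSpace Yd] (P : NormingDualPair Y Yd)

theorem norm_le_of_forall_abs_pair_le {y : Y} {C : ℝ} (hC : 0 ≤ C)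
    (h : ∀ yd : Yd, |P.pair yd y| ≤ C * ‖yd‖) : ‖y‖ ≤ C := by
  rw [P.norm_eq y]
  refine Real.sSup_le ?_ hC
  rintro _ ⟨yd, hyd, rfl⟩
  exact (h yd).trans (mul_le_of_le_one_right hC hyd)

theorem eq_of_forall_pair_eq_s1 {y y' : Y} (h : ∀ yd : Yd, P.pair yd y = P.pair yd y') : y = y' := by
  rw [← sub_eq_zero, ← norm_le_zero_iff]
  exact P.norm_le_of_forall_abs_pair_le le_rfl fun yd => by simp [h yd]

theorem continuous_pair (yd : Yd) : Continuous (P.pair yd) :=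
  AddMonoidHomClass.continuous_of_bound (P.pair yd) (P.M * ‖yd‖) (P.pair_bound yd)

theorem exists_pair_eq_of_uniform_approx (φ : Yd → ℝ) (w : ℕ → Y) {ε : ℕ → ℝ}
    (hε : Tendsto ε atTop (𝓝 0)) (hw : ∀ n yd, |P.pair yd (w n) - φ yd| ≤ ε n * ‖yd‖) :
    ∃ y : Y, ∀ yd, P.pair yd y = φ yd := by
  have hdist : ∀ m n, dist (w m) (w n) ≤ |ε m| + |ε n| := fun m n => by
    rw [dist_eq_norm]
    refine P.norm_le_of_forall_abs_pair_le (by positivity) fun yd => ?_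
    calc |P.pair yd (w m - w n)| = |(P.pair yd (w m) - φ yd) - (P.pair yd (w n) - φ yd)| := by
          rw [map_sub, sub_sub_sub_cancel_right]
      _ ≤ ε m * ‖yd‖ + ε n * ‖yd‖ := (abs_sub _ _).trans (add_le_add (hw m yd) (hw n yd))
      _ ≤ (|ε m| + |ε n|) * ‖yd‖ := by rw [add_mul]; gcongr <;> exact le_abs_self _
  have hcauchy : CauchySeq w := by
    refine Metric.cauchySeq_iff'.2 fun δ hδ => ?_
    obtain ⟨N, hN⟩ := Metric.tendsto_atTop.1 hε (δ / 2) (half_pos hδ)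
    refine ⟨N, fun n hn => (hdist n N).trans_lt ?_⟩
    have hn := hN n hn
    have hN' := hN N le_rfl
    rw [Real.dist_0_eq_abs] at hn hN'
    linarith
  obtain ⟨y, hy⟩ := cauchySeq_tendsto_of_complete hcauchy
  refine ⟨y, fun yd => tendsto_nhds_unique ((P.continuous_pair yd).tendsto y |>.comp hy) ?_⟩
  rw [tendsto_iff_norm_sub_tendsto_zero]
  refine squeeze_zero (fun n => norm_nonneg _) (fun n => hw n yd) ?_
  simpa using hε.mul_const ‖yd‖

end NormingDualPair

theorem Real.abs_exp_neg_sub_one_le {x : ℝ} (hx : 0 ≤ x) : |Real.exp (-x) - 1| ≤ x := by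
  rw [abs_of_nonpos (by simpa using hx)]
  linarith [Real.one_sub_le_exp_neg x]

theorem abs_sum_integral_exp_mul_sub_integral_le {f : ℝ → ℝ} {l h K : ℝ} {n : ℕ}
    (hl : 0 ≤ l) (hh : 0 ≤ h) (hf : IntervalIntegrable f volume 0 (n * h))
    (hK : ∀ u ∈ Set.Icc 0 (n * h), |f u| ≤ K) :
    |(∑ j ∈ Finset.range n, ∫ u in j * h..(j + 1) * h, Real.exp (-l * (u - j * h)) * f u)
        - ∫ u in 0..n * h, f u| ≤ l * h * (n * h) * K := by
  have hpiece : ∀ j < n, Set.uIcc ((j : ℝ) * h) ((j + 1) * h) ⊆ Set.Icc 0 (n * h) := by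
    intro j hj
    have hjn : (j : ℝ) + 1 ≤ n := by exact_mod_cast hj
    rw [Set.uIcc_of_le (by nlinarith)]
    exact Set.Icc_subset_Icc (by positivity) (by nlinarith)
  have hint : ∀ j < n, IntervalIntegrable f volume (j * h) ((j + 1) * h) := fun j hj =>
    hf.mono_set ((hpiece j hj).trans Set.Icc_subset_uIcc)
  have hsplit : ∑ j ∈ Finset.range n, ∫ u in j * h..(j + 1) * h, f u = ∫ u in 0..n * h, f u := by
    have := intervalIntegral.sum_integral_adjacent_intervals (f := f) (μ := volume)
      (a := fun j : ℕ => j * h) (n := n) fun j hj => by push_cast; exact hint j hj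
    push_cast at this
    simpa using this
  rw [← hsplit, ← Finset.sum_sub_distrib]
  calc _ ≤ ∑ j ∈ Finset.range n, l * h * K * h := by
        refine (Finset.abs_sum_le_sum_abs _ _).trans (Finset.sum_le_sum fun j hj => ?_)
        have hj := Finset.mem_range.1 hj
        rw [← intervalIntegral.integral_sub
          ((hint j hj).continuousOn_mul (by fun_prop)) (hint j hj), ← Real.norm_eq_abs]
        refine (intervalIntegral.norm_integral_le_of_norm_le_const (C := l * h * K)
          fun u hu => ?_).trans_eq ?_
        · rw [Set.uIoc_of_le (by nlinarith)] at hu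
          have hfu := hK u (hpiece j hj (Set.Icc_subset_uIcc (Set.Ioc_subset_Icc_self hu)))
          have hK0 : 0 ≤ K := (abs_nonneg _).trans hfu
          rw [← sub_one_mul, norm_mul, Real.norm_eq_abs, Real.norm_eq_abs, neg_mul]
          calc _ ≤ l * (u - j * h) * K :=
                mul_le_mul (Real.abs_exp_neg_sub_one_le (by nlinarith [hu.1])) hfu (abs_nonneg _)
                  (by nlinarith [hu.1])
            _ ≤ l * h * K := by gcongr; linarith [hu.2]
        · rw [abs_of_nonneg (by nlinarith)]; ring
    _ = l * h * (n * h) * K := by simp; ring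

theorem integral_Ioi_comp_add_right {E : Type*} [NormedAddCommGroup E] [NormedSpace ℝ E]
    (F : ℝ → E) (b d : ℝ) : ∫ x in Set.Ioi b, F (x + d) = ∫ x in Set.Ioi (b + d), F x := by
  simpa using (measurePreserving_add_right volume d).setIntegral_preimage_emb
    (measurableEmbedding_addRight d) F (Set.Ioi (b + d))

theorem integral_deriv_mul_integral_Ioi {φ g : ℝ → ℝ} {a b : ℝ} (hab : a ≤ b)
    (hφ : AbsolutelyContinuousOnInterval φ a b) (hg : IntegrableOn g (Set.Ioi a)) :
    ∫ σ in a..b, deriv φ σ * ∫ u in Set.Ioi σ, g u =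
      φ b * (∫ u in Set.Ioi b, g u) - φ a * (∫ u in Set.Ioi a, g u) + ∫ σ in a..b, φ σ * g σ := by
  have hgab : IntervalIntegrable g volume a b :=
    (intervalIntegrable_iff_integrableOn_Ioc_of_le hab).2 (hg.mono_set Set.Ioc_subset_Ioi_self)
  set R : ℝ → ℝ := fun σ => (∫ u in Set.Ioi a, g u) - ∫ u in a..σ, g u with hR
  have hR_tail : ∀ σ ∈ Set.uIcc a b, R σ = ∫ u in Set.Ioi σ, g u := fun σ hσ => by
    rw [Set.uIcc_of_le hab] at hσ
    simp only [hR]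
    rw [← intervalIntegral.integral_Ioi_sub_Ioi hg hσ.1, sub_sub_cancel]
  have hR_ac : AbsolutelyContinuousOnInterval R a b :=
    contDiffOn_const.absolutelyContinuousOnInterval.sub
      (hgab.absolutelyContinuousOnInterval_intervalIntegral Set.left_mem_uIcc)
  have hR_deriv : ∀ᵐ σ, σ ∈ Set.uIoc a b → deriv R σ = -g σ := by
    filter_upwards [hgab.ae_hasDerivAt_integral] with σ hσ hσab
    exact ((hσ (Set.uIoc_subset_uIcc hσab) a Set.left_mem_uIcc).const_sub _).deriv
  have hparts := hR_ac.integral_mul_deriv_eq_deriv_mul hφ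
  have hderiv_int : ∫ σ in a..b, deriv R σ * φ σ = -∫ σ in a..b, φ σ * g σ := by
    rw [← intervalIntegral.integral_neg]
    exact intervalIntegral.integral_congr_ae (hR_deriv.mono fun σ hσ hσab => by rw [hσ hσab]; ring)
  have hlhs : ∫ σ in a..b, deriv φ σ * (∫ u in Set.Ioi σ, g u) = ∫ σ in a..b, R σ * deriv φ σ :=
    intervalIntegral.integral_congr fun σ hσ => by rw [← hR_tail σ hσ, mul_comm]
  rw [hlhs, hparts, hderiv_int, hR_tail a Set.left_mem_uIcc, hR_tail b Set.right_mem_uIcc]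
  ring

namespace TwinSemigroup

variable {Y Yd : Type*} [NormedAddCommGroup Y] [NormedSpace ℝ Y] [CompleteSpace Y]
  [NormedAddCommGroup Yd] [NormedSpace ℝ Yd] [CompleteSpace Yd] {P : NormingDualPair Y Yd}
  (T : TwinSemigroup Y Yd P)

theorem abs_pair_S_le {t u : ℝ} (hu : 0 ≤ u) (hut : u ≤ t) (yd : Yd) (y : Y) :
    |P.pair yd (T.S u y)| ≤ T.M * Real.exp (|T.omega| * t) * ‖y‖ * ‖yd‖ := by
  refine (T.bound u hu yd y).trans ?_
  have hM : 0 ≤ T.M := zero_le_one.trans T.one_le_M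
  gcongr
  exact (le_abs_self _).trans (by gcongr)

theorem intervalIntegrable_pair_S {t : ℝ} (ht : 0 ≤ t) (yd : Yd) (y : Y) :
    IntervalIntegrable (fun u => P.pair yd (T.S u y)) volume 0 t := by
  rw [intervalIntegrable_iff_integrableOn_Ioc_of_le ht]
  refine Measure.integrableOn_of_bounded measure_Ioc_lt_top.ne
    (T.meas yd y).aestronglyMeasurable (M := T.M * Real.exp (|T.omega| * t) * ‖y‖ * ‖yd‖) ?_
  filter_upwards [ae_restrict_mem measurableSet_Ioc] with u hu
  exact T.abs_pair_S_le hu.1.le hu.2 yd y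

theorem integrableOn_exp_mul_pair_S {l : ℝ} (hl : T.omega < l) (yd : Yd) (y : Y) :
    IntegrableOn (fun u => Real.exp (-l * u) * P.pair yd (T.S u y)) (Set.Ioi 0) := by
  refine Integrable.mono' ((exp_neg_integrableOn_Ioi 0 (sub_pos.2 hl)).const_mul
    (T.M * ‖y‖ * ‖yd‖)) ((Real.measurable_exp.comp (measurable_const_mul (-l))).mul
      (T.meas yd y)).aestronglyMeasurable ?_
  filter_upwards [ae_restrict_mem measurableSet_Ioi] with u hu
  rw [norm_mul, Real.norm_eq_abs, Real.abs_exp, Real.norm_eq_abs]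
  calc _ ≤ Real.exp (-l * u) * (T.M * Real.exp (T.omega * u) * ‖y‖ * ‖yd‖) := by
        gcongr; exact T.bound u (le_of_lt hu) yd y
    _ = T.M * ‖y‖ * ‖yd‖ * Real.exp (-(l - T.omega) * u) := by
        rw [show -(l - T.omega) * u = -l * u + T.omega * u by ring, Real.exp_add]
        ring

theorem pair_lap_S {l a : ℝ} (hl : T.omega < l) (ha : 0 ≤ a) (yd : Yd) (y : Y) :
    P.pair yd (T.lap l (T.S a y)) =
      Real.exp (l * a) * ∫ u in Set.Ioi a, Real.exp (-l * u) * P.pair yd (T.S u y) := by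
  have hshift := integral_Ioi_comp_add_right (fun u => Real.exp (-l * u) * P.pair yd (T.S u y)) 0 a
  rw [zero_add] at hshift
  rw [T.lap_eq l hl, ← hshift, ← integral_const_mul]
  refine setIntegral_congr_fun measurableSet_Ioi fun τ hτ => ?_
  rw [← T.S_add τ a (le_of_lt hτ) ha, ← mul_assoc, ← Real.exp_add]
  ring_nf

theorem pair_lap_S_sub_exp_mul_pair_lap_S {l a h : ℝ} (hl : T.omega < l) (ha : 0 ≤ a)
    (hh : 0 ≤ h) (yd : Yd) (y : Y) :
    P.pair yd (T.lap l (T.S a y)) - Real.exp (-l * h) * P.pair yd (T.lap l (T.S (a + h) y)) =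
      ∫ u in a..a + h, Real.exp (-l * (u - a)) * P.pair yd (T.S u y) := by
  have hint := (T.integrableOn_exp_mul_pair_S hl yd y).mono_set (Set.Ioi_subset_Ioi ha)
  rw [T.pair_lap_S hl ha, T.pair_lap_S hl (by positivity), ← mul_assoc, ← Real.exp_add,
    show -l * h + l * (a + h) = l * a by ring, ← mul_sub,
    intervalIntegral.integral_Ioi_sub_Ioi hint (by linarith), ← intervalIntegral.integral_const_mul]
  refine intervalIntegral.integral_congr fun u _ => ?_
  rw [← mul_assoc, ← Real.exp_add]
  ring_nf

theorem exists_abs_pair_sub_integral_le {l h : ℝ} (hl : T.omega < l) (hl0 : 0 ≤ l) (hh : 0 ≤ h)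
    (n : ℕ) (y : Y) : ∃ v : Y, ∀ yd : Yd,
      |P.pair yd v - ∫ u in 0..n * h, P.pair yd (T.S u y)| ≤
        l * h * (n * h) * (T.M * Real.exp (|T.omega| * (n * h)) * ‖y‖) * ‖yd‖ := by
  refine ⟨∑ j ∈ Finset.range n,
    (T.lap l (T.S (j * h) y) - Real.exp (-l * h) • T.lap l (T.S ((j + 1) * h) y)), fun yd => ?_⟩
  have hpair : P.pair yd (∑ j ∈ Finset.range n,
      (T.lap l (T.S (j * h) y) - Real.exp (-l * h) • T.lap l (T.S ((j + 1) * h) y))) =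
      ∑ j ∈ Finset.range n, ∫ u in j * h..(j + 1) * h,
        Real.exp (-l * (u - j * h)) * P.pair yd (T.S u y) := by
    simp only [map_sum, map_sub, map_smul, smul_eq_mul]
    refine Finset.sum_congr rfl fun j _ => ?_
    rw [add_mul, one_mul, T.pair_lap_S_sub_exp_mul_pair_lap_S hl (by positivity) hh]
  rw [hpair, mul_assoc _ _ ‖yd‖]
  exact abs_sum_integral_exp_mul_sub_integral_le hl0 hh
    (T.intervalIntegrable_pair_S (by positivity) yd y)
    fun u hu => T.abs_pair_S_le hu.1 hu.2 yd y

theorem exists_pair_eq_integral {t : ℝ} (ht : 0 ≤ t) (y : Y) :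
    ∃ w : Y, ∀ yd : Yd, P.pair yd w = ∫ τ in 0..t, P.pair yd (T.S τ y) := by
  set l := max T.omega 0 + 1
  have hl : T.omega < l := by linarith [le_max_left T.omega 0]
  have hl0 : 0 ≤ l := by positivity
  set K := T.M * Real.exp (|T.omega| * t) * ‖y‖
  have hnh : ∀ n : ℕ, ((n + 1 : ℕ) : ℝ) * (t / (n + 1)) = t := fun n => by
    push_cast; field_simp
  choose v hv using fun n : ℕ =>
    T.exists_abs_pair_sub_integral_le hl hl0 (h := t / (n + 1)) (by positivity) (n + 1) y
  refine P.exists_pair_eq_of_uniform_approx _ v (ε := fun n => l * (t / (n + 1)) * t * K) ?_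
    fun n yd => by simpa only [hnh] using hv n yd
  simpa [div_eq_mul_inv, mul_assoc] using
    ((tendsto_one_div_add_atTop_nhds_zero_nat.const_mul t).mul_const t).const_mul l |>.mul_const K

theorem eq_lap_smul_sub_of_pair_eq_integral {t : ℝ} (ht : 0 ≤ t) {y w : Y}
    (hw : ∀ yd : Yd, P.pair yd w = ∫ τ in 0..t, P.pair yd (T.S τ y)) {l : ℝ} (hl : T.omega < l) :
    w = T.lap l (l • w - (T.S t y - y)) := by
  refine P.eq_of_forall_pair_eq_s1 fun yd => ?_
  set g := fun u => Real.exp (-l * u) * P.pair yd (T.S u y)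
  have hlap_w : P.pair yd (T.lap l w) =
      ∫ σ in 0..t, Real.exp (l * σ) * ∫ u in Set.Ioi σ, g u := by
    rw [← T.lap_compat l hl, hw]
    refine intervalIntegral.integral_congr fun σ hσ => ?_
    rw [Set.uIcc_of_le ht] at hσ
    rw [T.lap_compat l hl, T.pair_lap_S hl hσ.1]
  have hlap_y : P.pair yd (T.lap l y) = Real.exp (l * 0) * ∫ u in Set.Ioi 0, g u := by
    rw [← T.pair_lap_S hl le_rfl, T.S_zero, LinearMap.id_apply]
  have hderiv : ∀ σ, deriv (fun σ => Real.exp (l * σ)) σ = l * Real.exp (l * σ) := fun σ => by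
    simpa [mul_comm] using ((hasDerivAt_id σ).const_mul l).exp.deriv
  have hexp_ac : AbsolutelyContinuousOnInterval (fun σ => Real.exp (l * σ)) 0 t :=
    ContDiffOn.absolutelyContinuousOnInterval (by fun_prop)
  have hparts := integral_deriv_mul_integral_Ioi ht hexp_ac (T.integrableOn_exp_mul_pair_S hl yd y)
  simp only [hderiv, mul_assoc, intervalIntegral.integral_const_mul] at hparts
  have hcancel : ∫ σ in 0..t, Real.exp (l * σ) * g σ = P.pair yd w := by
    rw [hw]
    refine intervalIntegral.integral_congr fun σ _ => ?_
    rw [← mul_assoc, ← Real.exp_add, show l * σ + -l * σ = 0 by ring, Real.exp_zero, one_mul]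
  rw [map_sub, map_smul, map_sub, map_sub, map_smul, map_sub, smul_eq_mul, hlap_w, hparts, hcancel,
    T.pair_lap_S hl ht, hlap_y]
  ring

end TwinSemigroup

/-- Lemma 2.3 of Diekmann–Verduyn Lunel: for a twin semigroup, the weak integral
`∫₀ᵗ S(τ)y dτ` is represented by an element `w` of `Y`, which belongs to the domain of
the generator `C` with `S(t)y − y ∈ Cw`, i.e. `w = S̄(λ)(λw − (S(t)y − y))` for every
`λ > ω`. -/
theorem twin_orbit_integral_mem_domain
    {Y Yd : Type*} [NormedAddCommGroup Y] [NormedSpace ℝ Y] [CompleteSpace Y]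
    [NormedAddCommGroup Yd] [NormedSpace ℝ Yd] [CompleteSpace Yd]
    (P : NormingDualPair Y Yd) (T : TwinSemigroup Y Yd P) :
    ∀ t : ℝ, 0 < t → ∀ y : Y, ∃ w : Y,
      (∀ yd : Yd, P.pair yd w = ∫ τ in (0:ℝ)..t, P.pair yd (T.S τ y)) ∧
      (∀ l : ℝ, T.omega < l → w = T.lap l (l • w - (T.S t y - y))) := by
  intro t ht y
  obtain ⟨w, hw⟩ := T.exists_pair_eq_integral ht.le y
  exact ⟨w, hw, fun l hl => T.eq_lap_smul_sub_of_pair_eq_integral ht.le hw hl⟩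
end

section
/- Let {S(t)}_{t≥0} be a twin semigroup on a norming dual pair (Y,Y⋄). Assume that every sequentially σ(Y⋄,Y)-continuous linear functional on Y⋄ is σ(Y⋄,Y)-continuous; equivalently, every linear map φ : Y⋄ → ℝ with the property that φ(y⋄_m) → 0 whenever (y⋄_m) is a sequence in Y⋄ with ⟨y⋄_m, y⟩ → 0 for all y ∈ Y, is represented by an element of Y. Let q ∈ Y and let f : [0,T] → ℝ be bounded and Borel measurable. Then for every t ∈ [0,T] there exists an element u(t) ∈ Y such that ⟨y⋄, u(t)⟩ = ∫₀ᵗ y⋄S(t−τ)q · f(τ) dτ for all y⋄ ∈ Y⋄. -/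
open MeasureTheory Filter Topology

/-!
The functional `y⋄ ↦ ∫₀ᵗ y⋄S(t−τ)q f(τ) dτ` on `Y⋄` is linear and sequentially
`σ(Y⋄,Y)`-continuous, so by assumption it is represented by some `u(t) ∈ Y`. Sequential
continuity is dominated convergence: a `σ(Y⋄,Y)`-null sequence is pointwise bounded on `Y`,
hence norm bounded by Banach–Steinhaus (`Y` is complete and norms `Y⋄`), and the integrand
is bounded by a constant times `‖y⋄‖` on `[0,t]`.
-/

namespace NormingDualPair

variable {Y Yd : Type*} [NormedAddCommGroup Y] [NormedSpace ℝ Y] [CompleteSpace Y]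
  [NormedAddCommGroup Yd] [NormedSpace ℝ Yd] [CompleteSpace Yd] (P : NormingDualPair Y Yd)

def SeqContinuousFunctionalsRepresented : Prop :=
  ∀ φ : Yd →ₗ[ℝ] ℝ,
    (∀ yds : ℕ → Yd,
      (∀ y : Y, Tendsto (fun m => P.pair (yds m) y) atTop (𝓝 0)) →
      Tendsto (fun m => φ (yds m)) atTop (𝓝 0)) →
    ∃ y : Y, ∀ yd : Yd, φ yd = P.pair yd y

def pairCLM (yd : Yd) : Y →L[ℝ] ℝ :=
  (P.pair yd).mkContinuous (P.M * ‖yd‖) fun y => by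
    simpa only [Real.norm_eq_abs] using P.pair_bound yd y

theorem norm_le_of_abs_pair_le {yd : Yd} {c : ℝ} (hc : 0 ≤ c)
    (h : ∀ y : Y, ‖y‖ ≤ 1 → |P.pair yd y| ≤ c) : ‖yd‖ ≤ c := by
  rw [P.norm_eq' yd]
  refine Real.sSup_le ?_ hc
  rintro r ⟨y, hy, rfl⟩
  exact h y hy

theorem norm_pairCLM_le (yd : Yd) : ‖yd‖ ≤ ‖P.pairCLM yd‖ :=
  P.norm_le_of_abs_pair_le (norm_nonneg _) fun y hy =>
    calc |P.pair yd y| = ‖P.pairCLM yd y‖ := rfl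
      _ ≤ ‖P.pairCLM yd‖ * ‖y‖ := (P.pairCLM yd).le_opNorm y
      _ ≤ ‖P.pairCLM yd‖ := mul_le_of_le_one_right (norm_nonneg _) hy

theorem exists_norm_le_of_forall_abs_pair_le {ι : Type*} {yds : ι → Yd}
    (h : ∀ y : Y, ∃ c, ∀ i, |P.pair (yds i) y| ≤ c) : ∃ C, ∀ i, ‖yds i‖ ≤ C := by
  obtain ⟨C, hC⟩ := banach_steinhaus (g := fun i => P.pairCLM (yds i)) h
  exact ⟨C, fun i => (P.norm_pairCLM_le (yds i)).trans (hC i)⟩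

theorem exists_norm_le_of_tendsto_pair {yds : ℕ → Yd}
    (h : ∀ y : Y, Tendsto (fun m => P.pair (yds m) y) atTop (𝓝 0)) :
    ∃ C, ∀ m, ‖yds m‖ ≤ C := by
  refine P.exists_norm_le_of_forall_abs_pair_le fun y => ?_
  obtain ⟨c, hc⟩ := (h y).norm.bddAbove_range
  exact ⟨c, fun m => hc ⟨m, rfl⟩⟩

section WeakIntegral

variable {α : Type*} [MeasurableSpace α] {μ : Measure α} {w : α → Y}

noncomputable def integralFunctional (μ : Measure α) (w : α → Y)
    (hint : ∀ yd : Yd, Integrable (fun a => P.pair yd (w a)) μ) : Yd →ₗ[ℝ] ℝ where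
  toFun yd := ∫ a, P.pair yd (w a) ∂μ
  map_add' yd yd' := by
    simp only [map_add, LinearMap.add_apply]
    exact integral_add (hint yd) (hint yd')
  map_smul' c yd := by
    simp only [map_smul, LinearMap.smul_apply, smul_eq_mul, RingHom.id_apply]
    exact integral_const_mul c _

variable [IsFiniteMeasure μ] {B : ℝ}

theorem integrable_pair_of_bound
    (hmeas : ∀ yd : Yd, AEStronglyMeasurable (fun a => P.pair yd (w a)) μ)
    (hbound : ∀ yd : Yd, ∀ᵐ a ∂μ, |P.pair yd (w a)| ≤ B * ‖yd‖) (yd : Yd) :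
    Integrable (fun a => P.pair yd (w a)) μ :=
  .of_bound (hmeas yd) (B * ‖yd‖) (hbound yd)

theorem tendsto_integralFunctional
    (hmeas : ∀ yd : Yd, AEStronglyMeasurable (fun a => P.pair yd (w a)) μ)
    (hbound : ∀ yd : Yd, ∀ᵐ a ∂μ, |P.pair yd (w a)| ≤ B * ‖yd‖) {yds : ℕ → Yd}
    (h : ∀ y : Y, Tendsto (fun m => P.pair (yds m) y) atTop (𝓝 0)) :
    Tendsto (fun m => P.integralFunctional μ w (P.integrable_pair_of_bound hmeas hbound) (yds m))
      atTop (𝓝 0) := by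
  obtain ⟨C, hC⟩ := P.exists_norm_le_of_tendsto_pair h
  have hdom : ∀ m, ∀ᵐ a ∂μ, ‖P.pair (yds m) (w a)‖ ≤ |B| * C := fun m => by
    filter_upwards [hbound (yds m)] with a ha
    calc ‖P.pair (yds m) (w a)‖ ≤ B * ‖yds m‖ := ha
      _ ≤ |B| * ‖yds m‖ := by gcongr; exact le_abs_self B
      _ ≤ |B| * C := by gcongr; exact hC m
  have := tendsto_integral_of_dominated_convergence (fun _ => |B| * C)
    (fun m => hmeas (yds m)) (integrable_const _) hdom (.of_forall fun a => h (w a))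
  rwa [integral_zero] at this

theorem exists_pair_eq_integral (hrep : P.SeqContinuousFunctionalsRepresented)
    (hmeas : ∀ yd : Yd, AEStronglyMeasurable (fun a => P.pair yd (w a)) μ)
    (hbound : ∀ yd : Yd, ∀ᵐ a ∂μ, |P.pair yd (w a)| ≤ B * ‖yd‖) :
    ∃ u : Y, ∀ yd : Yd, P.pair yd u = ∫ a, P.pair yd (w a) ∂μ := by
  obtain ⟨u, hu⟩ := hrep _ fun _ => P.tendsto_integralFunctional hmeas hbound
  exact ⟨u, fun yd => (hu yd).symm⟩

end WeakIntegral

end NormingDualPair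

namespace TwinSemigroup

variable {Y Yd : Type*} [NormedAddCommGroup Y] [NormedSpace ℝ Y] [CompleteSpace Y]
  [NormedAddCommGroup Yd] [NormedSpace ℝ Yd] [CompleteSpace Yd] {P : NormingDualPair Y Yd}
  (T : TwinSemigroup Y Yd P)

theorem abs_pair_S_le_of_le {s t : ℝ} (hs : 0 ≤ s) (hst : s ≤ t) (yd : Yd) (y : Y) :
    |P.pair yd (T.S s y)| ≤ T.M * Real.exp (|T.omega| * t) * ‖y‖ * ‖yd‖ := by
  have hM : 0 ≤ T.M := zero_le_one.trans T.one_le_M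
  have hexp : T.omega * s ≤ |T.omega| * t :=
    (le_abs_self _).trans (by rw [abs_mul, abs_of_nonneg hs]; gcongr)
  calc |P.pair yd (T.S s y)| ≤ T.M * Real.exp (T.omega * s) * ‖y‖ * ‖yd‖ := T.bound s hs yd y
    _ ≤ T.M * Real.exp (|T.omega| * t) * ‖y‖ * ‖yd‖ := by gcongr

end TwinSemigroup

/-- Lemma 4.2 of Diekmann–Verduyn Lunel: if every sequentially `σ(Y⋄,Y)`-continuous
linear functional on `Y⋄` is represented by an element of `Y`, then for `q ∈ Y` and a
bounded measurable `f : [0,T] → ℝ`, the weak integral `∫₀ᵗ S(t−τ)q f(τ) dτ` is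
represented by an element of `Y`. -/
theorem twin_voc_integral_represented_of_seq_continuity
    {Y Yd : Type*} [NormedAddCommGroup Y] [NormedSpace ℝ Y] [CompleteSpace Y]
    [NormedAddCommGroup Yd] [NormedSpace ℝ Yd] [CompleteSpace Yd]
    (P : NormingDualPair Y Yd) (T : TwinSemigroup Y Yd P)
    (hrep : ∀ φ : Yd →ₗ[ℝ] ℝ,
      (∀ yds : ℕ → Yd,
        (∀ y : Y, Tendsto (fun m => P.pair (yds m) y) atTop (𝓝 0)) →
        Tendsto (fun m => φ (yds m)) atTop (𝓝 0)) →
      ∃ y : Y, ∀ yd : Yd, φ yd = P.pair yd y)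
    (q : Y) (Tmax : ℝ) (f : ℝ → ℝ) (hfm : Measurable f)
    (C : ℝ) (hfb : ∀ τ ∈ Set.Icc (0:ℝ) Tmax, |f τ| ≤ C) :
    ∀ t ∈ Set.Icc (0:ℝ) Tmax, ∃ u : Y, ∀ yd : Yd,
      P.pair yd u = ∫ τ in (0:ℝ)..t, P.pair yd (T.S (t - τ) q) * f τ := by
  rintro t ⟨ht0, htT⟩
  have hC : 0 ≤ C := (abs_nonneg _).trans (hfb 0 ⟨le_rfl, ht0.trans htT⟩)
  have hbound : ∀ yd : Yd, ∀ᵐ τ ∂volume.restrict (Set.Ioc 0 t),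
      |P.pair yd (f τ • T.S (t - τ) q)| ≤ C * (T.M * Real.exp (|T.omega| * t) * ‖q‖) * ‖yd‖ :=
    fun yd => ae_restrict_of_forall_mem measurableSet_Ioc fun τ ⟨hτ0, hτt⟩ =>
      calc |P.pair yd (f τ • T.S (t - τ) q)| = |f τ| * |P.pair yd (T.S (t - τ) q)| := by
            rw [map_smul, smul_eq_mul, abs_mul]
        _ ≤ C * (T.M * Real.exp (|T.omega| * t) * ‖q‖ * ‖yd‖) :=
            mul_le_mul (hfb τ ⟨hτ0.le, hτt.trans htT⟩)
              (T.abs_pair_S_le_of_le (sub_nonneg.2 hτt) (by linarith) yd q) (abs_nonneg _) hC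
        _ = C * (T.M * Real.exp (|T.omega| * t) * ‖q‖) * ‖yd‖ := by ring
  have hmeas : ∀ yd : Yd, AEStronglyMeasurable (fun τ => P.pair yd (f τ • T.S (t - τ) q))
      (volume.restrict (Set.Ioc 0 t)) := fun yd => by
    simp only [map_smul, smul_eq_mul]
    exact (hfm.mul ((T.meas yd q).comp (measurable_const.sub measurable_id))).aestronglyMeasurable
  obtain ⟨u, hu⟩ := P.exists_pair_eq_integral hrep hmeas hbound
  refine ⟨u, fun yd => ?_⟩
  rw [hu, intervalIntegral.integral_of_le ht0]
  simp only [map_smul, smul_eq_mul, mul_comm]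
end

section
/- Let ζ : [0,1] → ℝ^{n×n} have entries of bounded variation, right-continuous on (0,1), with ζ(0) = 0, and extend ζ by ζ(τ) = ζ(1) for τ ≥ 1. Let φ : [-1,0] → ℝⁿ be bounded and Borel measurable. Define f(t) = φ(0) + ∫₀¹ (ζ(t+σ) − ζ(σ)) φ(−σ) dσ for t ≥ 0, and let ρ = Σ_{l=1}^∞ ζ^{l∗} (convergent in the sense of locally uniform convergence) be the resolvent of ζ, the unique solution of ρ∗ζ + ζ = ρ = ζ∗ρ + ζ, where (g∗h)(t) = ∫₀ᵗ g(t−s)h(s) ds. Then the unique locally bounded measurable solution of the Volterra equation x = ζ∗x + f on [0,∞) (equivalently, of the retarded functional differential equation ẋ(t) = ∫_{[0,1]} dζ(σ) x(t−σ) for t ≥ 0 with x(θ) = φ(θ) for −1 ≤ θ ≤ 0) is given by x(t) = (I + ∫₀ᵗ ρ(σ) dσ) φ(0) + ∫₀¹ { ζ(t+σ) − ζ(σ) + ∫₀ᵗ ρ(τ)(ζ(t−τ+σ) − ζ(σ)) dτ } φ(−σ) dσ. -/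
/-!
If `x = ζ∗x + f`, convolving with the resolvent and using `ρ∗ζ = ρ - ζ` gives
`ρ∗(x - f) = (ρ∗ζ)∗x = (ρ - ζ)∗x`, that is `ζ∗x = ρ∗f`; the associativity used here is Fubini on
a triangle. Hence `x = f + ρ∗f`, and inserting the definition of `f` and exchanging the `τ`- and
`σ`-integrals (Fubini on a rectangle) gives the formula. The integrals only see `ζ` on `[0, ∞)`,
where it agrees with `ζ ∘ proj_[0,1]`; that kernel is measurable and bounded because `ζ` has
bounded variation, which is what Fubini needs.
-/

open MeasureTheory Set Function Matrix

def MeasurableBddOn {α E : Type*} [MeasurableSpace α] [Norm E] [MeasurableSpace E] (f : α → E)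
    (s : Set α) : Prop :=
  Measurable f ∧ ∃ C, ∀ x ∈ s, ‖f x‖ ≤ C

namespace MeasurableBddOn

variable {α β E : Type*} [MeasurableSpace α] [MeasurableSpace β] [SeminormedAddCommGroup E]
  [MeasurableSpace E] {f g : α → E} {s t : Set α}

theorem mono (hf : MeasurableBddOn f s) (hts : t ⊆ s) : MeasurableBddOn f t :=
  ⟨hf.1, hf.2.imp fun _ hC x hx => hC x (hts hx)⟩

theorem comp {f : β → E} {s : Set β} (hf : MeasurableBddOn f s) {g : α → β} (hg : Measurable g)
    (hmaps : MapsTo g t s) : MeasurableBddOn (f ∘ g) t :=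
  ⟨hf.1.comp hg, hf.2.imp fun _ hC x hx => hC (g x) (hmaps hx)⟩

theorem const (c : E) : MeasurableBddOn (fun _ : α => c) s :=
  ⟨measurable_const, ‖c‖, fun _ _ => le_rfl⟩

theorem add [MeasurableAdd₂ E] (hf : MeasurableBddOn f s) (hg : MeasurableBddOn g s) :
    MeasurableBddOn (fun x => f x + g x) s := by
  obtain ⟨Cf, hCf⟩ := hf.2
  obtain ⟨Cg, hCg⟩ := hg.2
  exact ⟨hf.1.add hg.1, Cf + Cg, fun x hx =>
    (norm_add_le _ _).trans (add_le_add (hCf x hx) (hCg x hx))⟩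

theorem sub [MeasurableSub₂ E] (hf : MeasurableBddOn f s) (hg : MeasurableBddOn g s) :
    MeasurableBddOn (fun x => f x - g x) s := by
  obtain ⟨Cf, hCf⟩ := hf.2
  obtain ⟨Cg, hCg⟩ := hg.2
  exact ⟨hf.1.sub hg.1, Cf + Cg, fun x hx =>
    (norm_sub_le _ _).trans (add_le_add (hCf x hx) (hCg x hx))⟩

theorem of_uncurry_left {F : α → β → E} {s : Set α} {t : Set β}
    (hF : MeasurableBddOn (uncurry F) (s ×ˢ t)) {x : α} (hx : x ∈ s) : MeasurableBddOn (F x) t :=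
  hF.comp measurable_prodMk_left fun _ hy => ⟨hx, hy⟩

theorem uncurry_swap {F : α → β → E} {s : Set α} {t : Set β}
    (hF : MeasurableBddOn (uncurry F) (s ×ˢ t)) :
    MeasurableBddOn (uncurry fun y x => F x y) (t ×ˢ s) :=
  hF.comp measurable_swap fun _ hp => ⟨hp.2, hp.1⟩

end MeasurableBddOn

section IntervalIntegral

variable {E : Type*} [NormedAddCommGroup E] [MeasurableSpace E] [BorelSpace E]
  [SecondCountableTopology E]

theorem MeasurableBddOn.intervalIntegrable {f : ℝ → E} {a b : ℝ} (hab : a ≤ b)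
    (hf : MeasurableBddOn f (Icc a b)) : IntervalIntegrable f volume a b := by
  obtain ⟨C, hC⟩ := hf.2
  refine intervalIntegrable_const.mono_fun' hf.1.aestronglyMeasurable
    (ae_restrict_of_forall_mem measurableSet_uIoc fun x hx => hC x ?_)
  rw [uIoc_of_le hab] at hx
  exact Ioc_subset_Icc_self hx

variable [NormedSpace ℝ E]

theorem Measurable.intervalIntegral_prod_right {α : Type*} [MeasurableSpace α] {F : α → ℝ → E}
    (hF : Measurable (uncurry F)) (a b : ℝ) : Measurable fun x => ∫ y in a..b, F x y := by
  have h : ∀ s : Set ℝ, StronglyMeasurable fun x => ∫ y in s, F x y := fun s =>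
    hF.stronglyMeasurable.integral_prod_right (ν := volume.restrict s)
  exact ((h _).sub (h _)).measurable

theorem MeasurableBddOn.intervalIntegral {α : Type*} [MeasurableSpace α] {F : α → ℝ → E}
    {s : Set α} {c d : ℝ} (hcd : c ≤ d) (hF : MeasurableBddOn (uncurry F) (s ×ˢ Icc c d)) :
    MeasurableBddOn (fun x => ∫ y in c..d, F x y) s := by
  obtain ⟨C, hC⟩ := hF.2
  refine ⟨hF.1.intervalIntegral_prod_right c d, C * |d - c|, fun x hx => ?_⟩
  refine intervalIntegral.norm_integral_le_of_norm_le_const fun y hy => hC (x, y) ⟨hx, ?_⟩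
  rw [uIoc_of_le hcd] at hy
  exact Ioc_subset_Icc_self hy

theorem intervalIntegral_integral_swap_of_measurableBddOn {F : ℝ → ℝ → E} {a b c d : ℝ}
    (hab : a ≤ b) (hcd : c ≤ d) (hF : MeasurableBddOn (uncurry F) (Icc a b ×ˢ Icc c d)) :
    ∫ x in a..b, ∫ y in c..d, F x y = ∫ y in c..d, ∫ x in a..b, F x y := by
  obtain ⟨C, hC⟩ := hF.2
  have hint : Integrable (uncurry F)
      ((volume.restrict (Ioc a b)).prod (volume.restrict (Ioc c d))) := by
    refine .of_bound hF.1.aestronglyMeasurable C ?_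
    rw [Measure.prod_restrict]
    exact ae_restrict_of_forall_mem (measurableSet_Ioc.prod measurableSet_Ioc) fun p hp =>
      hC p ⟨Ioc_subset_Icc_self hp.1, Ioc_subset_Icc_self hp.2⟩
  simp only [intervalIntegral.integral_of_le hab, intervalIntegral.integral_of_le hcd]
  exact integral_integral_swap hint

theorem intervalIntegral_integral_swap_triangle {F : ℝ → ℝ → E} {a b : ℝ} (hab : a ≤ b)
    (hF : MeasurableBddOn (uncurry F) {p | a ≤ p.2 ∧ p.2 ≤ p.1 ∧ p.1 ≤ b}) :
    ∫ x in a..b, ∫ y in a..x, F x y = ∫ y in a..b, ∫ x in y..b, F x y := by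
  -- `G` extends `F` by zero off the triangle; the diagonal `y = x` is a null set
  set G : ℝ → ℝ → E := fun x y => if y < x then F x y else 0
  obtain ⟨C, hC⟩ := hF.2
  have hG : MeasurableBddOn (uncurry G) (Icc a b ×ˢ Icc a b) := by
    refine ⟨Measurable.ite (measurableSet_lt measurable_snd measurable_fst) hF.1
      measurable_const, max C 0, fun p hp => ?_⟩
    change ‖G p.1 p.2‖ ≤ max C 0
    by_cases h : p.2 < p.1
    · simp only [G, if_pos h]
      exact le_max_of_le_left (hC p ⟨hp.2.1, h.le, hp.1.2⟩)
    · simp only [G, if_neg h, norm_zero, le_max_right]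
  have inner_x : ∀ x ∈ uIcc a b, ∫ y in a..x, F x y = ∫ y in a..b, G x y := by
    intro x hx
    rw [uIcc_of_le hab] at hx
    have hset : Ioc a b ∩ Iio x = Ioo a x := by
      ext y
      simp only [mem_inter_iff, mem_Ioc, mem_Iio, mem_Ioo]
      constructor
      · exact fun h => ⟨h.1.1, h.2⟩
      · exact fun h => ⟨⟨h.1, by linarith [h.2, hx.2]⟩, h.2⟩
    have hG_x : G x = (Iio x).indicator (F x) := by
      ext y
      simp [G, indicator_apply]
    rw [intervalIntegral.integral_of_le hx.1, intervalIntegral.integral_of_le hab, hG_x,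
      setIntegral_indicator measurableSet_Iio, hset, integral_Ioc_eq_integral_Ioo]
  have inner_y : ∀ y ∈ uIcc a b, ∫ x in a..b, G x y = ∫ x in y..b, F x y := by
    intro y hy
    rw [uIcc_of_le hab] at hy
    have hG_y : (fun x => G x y) = (Ioi y).indicator (fun x => F x y) := by
      ext x
      simp [G, indicator_apply]
    rw [intervalIntegral.integral_of_le hy.2, intervalIntegral.integral_of_le hab, hG_y,
      setIntegral_indicator measurableSet_Ioi, Ioc_inter_Ioi, max_eq_right hy.1]
  rw [intervalIntegral.integral_congr inner_x,
    intervalIntegral_integral_swap_of_measurableBddOn hab hab hG,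
    intervalIntegral.integral_congr inner_y]

end IntervalIntegral

section Matrix

variable {ι : Type*} [Fintype ι]

theorem Matrix.norm_mulVec_le_of_abs_le {A : Matrix ι ι ℝ} {v : ι → ℝ} {C D : ℝ}
    (hA : ∀ i j, |A i j| ≤ C) (hv : ‖v‖ ≤ D) : ‖A *ᵥ v‖ ≤ Fintype.card ι * C * D := by
  rcases isEmpty_or_nonempty ι with hι | ⟨⟨i₀⟩⟩
  · simp [Subsingleton.elim (A *ᵥ v) 0]
  have hC : 0 ≤ C := (abs_nonneg _).trans (hA i₀ i₀)
  have hD : 0 ≤ D := (norm_nonneg v).trans hv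
  refine (pi_norm_le_iff_of_nonneg (by positivity)).2 fun i => ?_
  calc ‖(A *ᵥ v) i‖ = |∑ j, A i j * v j| := rfl
    _ ≤ ∑ j, |A i j * v j| := Finset.abs_sum_le_sum_abs _ _
    _ ≤ ∑ _j : ι, C * D := Finset.sum_le_sum fun j _ => by
      rw [abs_mul]
      exact mul_le_mul (hA i j) ((norm_le_pi_norm v j).trans hv) (abs_nonneg _) hC
    _ = Fintype.card ι * C * D := by simp [mul_assoc]

theorem Matrix.abs_mul_apply_le_of_abs_le {A B : Matrix ι ι ℝ} {CA CB : ℝ}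
    (hA : ∀ i j, |A i j| ≤ CA) (hB : ∀ i j, |B i j| ≤ CB) (i j : ι) :
    |(A * B) i j| ≤ Fintype.card ι * CA * CB :=
  calc |(A * B) i j| = |∑ k, A i k * B k j| := rfl
    _ ≤ ∑ k, |A i k * B k j| := Finset.abs_sum_le_sum_abs _ _
    _ ≤ ∑ _k : ι, CA * CB := Finset.sum_le_sum fun k _ => by
      rw [abs_mul]
      exact mul_le_mul (hA i k) (hB k j) (abs_nonneg _) ((abs_nonneg _).trans (hA i k))
    _ = Fintype.card ι * CA * CB := by simp [mul_assoc]

theorem intervalIntegral.eval_integral {f : ℝ → ι → ℝ} {a b : ℝ}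
    (hf : IntervalIntegrable f volume a b) (i : ι) :
    (∫ x in a..b, f x) i = ∫ x in a..b, f x i :=
  ((ContinuousLinearMap.proj (R := ℝ) (φ := fun _ : ι => ℝ) i).intervalIntegral_comp_comm
    hf).symm

theorem Matrix.mulVec_intervalIntegral {m : Type*} [Fintype m] (A : Matrix m ι ℝ)
    {f : ℝ → ι → ℝ} {a b : ℝ} (hf : IntervalIntegrable f volume a b) :
    A *ᵥ ∫ x in a..b, f x = ∫ x in a..b, A *ᵥ f x :=
  ((Matrix.mulVecLin A).toContinuousLinearMap.intervalIntegral_comp_comm hf).symm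

theorem Matrix.of_intervalIntegral_mulVec {m : Type*} [Fintype m] {M : ℝ → Matrix m ι ℝ} {a b : ℝ}
    (hM : ∀ i j, IntervalIntegrable (fun x => M x i j) volume a b) (v : ι → ℝ) :
    Matrix.of (fun i j => ∫ x in a..b, M x i j) *ᵥ v = ∫ x in a..b, M x *ᵥ v := by
  have hrow : ∀ i j, IntervalIntegrable (fun x => M x i j * v j) volume a b :=
    fun i j => (hM i j).mul_const _
  have hvec : IntervalIntegrable (fun x => M x *ᵥ v) volume a b := by
    rw [intervalIntegrable_iff, IntegrableOn, integrable_pi_iff]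
    exact fun i => integrable_finsetSum _ fun j _ => (hrow i j).def'
  ext i
  rw [intervalIntegral.eval_integral hvec]
  simp only [mulVec, dotProduct, of_apply]
  rw [intervalIntegral.integral_finsetSum fun j _ => hrow i j]
  simp only [intervalIntegral.integral_mul_const]

end Matrix

def EntrywiseMeasurableBddOn {α ι : Type*} [MeasurableSpace α] (K : α → Matrix ι ι ℝ)
    (s : Set α) : Prop :=
  ∀ i j, MeasurableBddOn (fun x => K x i j) s

namespace EntrywiseMeasurableBddOn

variable {α β ι : Type*} [MeasurableSpace α] [MeasurableSpace β] {K L : α → Matrix ι ι ℝ}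
  {s t : Set α}

theorem exists_bound [Finite ι] (hK : EntrywiseMeasurableBddOn K s) :
    ∃ C, ∀ x ∈ s, ∀ i j, |K x i j| ≤ C := by
  choose C hC using fun i j => (hK i j).2
  obtain ⟨M, hM⟩ := (finite_range (uncurry C)).bddAbove
  exact ⟨M, fun x hx i j => (hC i j x hx).trans (hM ⟨(i, j), rfl⟩)⟩

theorem mono (hK : EntrywiseMeasurableBddOn K s) (hts : t ⊆ s) :
    EntrywiseMeasurableBddOn K t :=
  fun i j => (hK i j).mono hts

theorem comp {K : β → Matrix ι ι ℝ} {s : Set β} (hK : EntrywiseMeasurableBddOn K s)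
    {g : α → β} (hg : Measurable g) (hmaps : MapsTo g t s) :
    EntrywiseMeasurableBddOn (fun x => K (g x)) t :=
  fun i j => (hK i j).comp hg hmaps

theorem sub (hK : EntrywiseMeasurableBddOn K s) (hL : EntrywiseMeasurableBddOn L s) :
    EntrywiseMeasurableBddOn (fun x => K x - L x) s :=
  fun i j => (hK i j).sub (hL i j)

theorem mul [Fintype ι] (hK : EntrywiseMeasurableBddOn K s) (hL : EntrywiseMeasurableBddOn L s) :
    EntrywiseMeasurableBddOn (fun x => K x * L x) s := by
  obtain ⟨CK, hCK⟩ := hK.exists_bound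
  obtain ⟨CL, hCL⟩ := hL.exists_bound
  refine fun i j => ⟨?_, Fintype.card ι * CK * CL, fun x hx => ?_⟩
  · simp only [Matrix.mul_apply]
    exact Finset.measurable_sum _ fun k _ => (hK i k).1.mul (hL k j).1
  · exact Matrix.abs_mul_apply_le_of_abs_le (hCK x hx) (hCL x hx) i j

theorem mulVec [Fintype ι] {y : α → ι → ℝ} (hK : EntrywiseMeasurableBddOn K s)
    (hy : MeasurableBddOn y s) :
    MeasurableBddOn (fun x => K x *ᵥ y x) s := by
  obtain ⟨CK, hCK⟩ := hK.exists_bound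
  obtain ⟨Cy, hCy⟩ := hy.2
  refine ⟨measurable_pi_lambda _ fun i => ?_, Fintype.card ι * CK * Cy, fun x hx =>
    Matrix.norm_mulVec_le_of_abs_le (hCK x hx) (hCy x hx)⟩
  simp only [Matrix.mulVec, dotProduct]
  exact Finset.measurable_sum _ fun j _ => (hK i j).1.mul ((measurable_pi_apply j).comp hy.1)

end EntrywiseMeasurableBddOn

namespace Volterra

variable {ι : Type*} [Fintype ι]

/- `conv K y t` is the truncated convolution `(K∗y)(t)`, and `kernelConv K L t` is `(K∗L)(t)`,
computed entrywise. -/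
noncomputable def conv (K : ℝ → Matrix ι ι ℝ) (y : ℝ → ι → ℝ) (t : ℝ) : ι → ℝ :=
  ∫ s in (0 : ℝ)..t, K (t - s) *ᵥ y s

noncomputable def kernelConv (K L : ℝ → Matrix ι ι ℝ) (t : ℝ) : Matrix ι ι ℝ :=
  Matrix.of fun i j => ∫ s in (0 : ℝ)..t, (K (t - s) * L s) i j

variable {K K' L L' : ℝ → Matrix ι ι ℝ} {y y' g : ℝ → ι → ℝ} {t : ℝ}

theorem mapsTo_sub_Icc (t : ℝ) : MapsTo (fun s => t - s) (Icc 0 t) (Icc 0 t) :=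
  fun _ hs => ⟨sub_nonneg.2 hs.2, sub_le_self t hs.1⟩

theorem conv_congr (ht : 0 ≤ t) (hK : EqOn K K' (Icc 0 t)) (hy : EqOn y y' (Icc 0 t)) :
    conv K y t = conv K' y' t := by
  refine intervalIntegral.integral_congr fun s hs => ?_
  rw [uIcc_of_le ht] at hs
  simp only [hK (mapsTo_sub_Icc t hs), hy hs]

theorem kernelConv_congr (ht : 0 ≤ t) (hK : EqOn K K' (Icc 0 t)) (hL : EqOn L L' (Icc 0 t)) :
    kernelConv K L t = kernelConv K' L' t := by
  ext i j
  refine intervalIntegral.integral_congr fun s hs => ?_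
  rw [uIcc_of_le ht] at hs
  simp only [hK (mapsTo_sub_Icc t hs), hL hs]

theorem intervalIntegrable_conv (ht : 0 ≤ t) (hK : EntrywiseMeasurableBddOn K (Icc 0 t))
    (hy : MeasurableBddOn y (Icc 0 t)) :
    IntervalIntegrable (fun s => K (t - s) *ᵥ y s) volume 0 t :=
  ((hK.comp (by fun_prop) (mapsTo_sub_Icc t)).mulVec hy).intervalIntegrable ht

theorem conv_sub_left (ht : 0 ≤ t) (hK : EntrywiseMeasurableBddOn K (Icc 0 t))
    (hL : EntrywiseMeasurableBddOn L (Icc 0 t)) (hy : MeasurableBddOn y (Icc 0 t)) :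
    conv (fun s => K s - L s) y t = conv K y t - conv L y t := by
  simp only [conv, sub_mulVec]
  exact intervalIntegral.integral_sub (intervalIntegrable_conv ht hK hy)
    (intervalIntegrable_conv ht hL hy)

theorem conv_sub_right (ht : 0 ≤ t) (hK : EntrywiseMeasurableBddOn K (Icc 0 t))
    (hy : MeasurableBddOn y (Icc 0 t)) (hg : MeasurableBddOn g (Icc 0 t)) :
    conv K (fun s => y s - g s) t = conv K y t - conv K g t := by
  simp only [conv, mulVec_sub]
  exact intervalIntegral.integral_sub (intervalIntegrable_conv ht hK hy)
    (intervalIntegrable_conv ht hK hg)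

theorem conv_eq_integral_comp_sub (K : ℝ → Matrix ι ι ℝ) (y : ℝ → ι → ℝ) (t : ℝ) :
    conv K y t = ∫ s in (0 : ℝ)..t, K s *ᵥ y (t - s) := by
  have h := intervalIntegral.integral_comp_sub_left (fun s => K s *ᵥ y (t - s)) t
    (a := 0) (b := t)
  simp only [sub_sub_cancel, sub_self, sub_zero] at h
  exact h

theorem kernelConv_mulVec (ht : 0 ≤ t) (hK : EntrywiseMeasurableBddOn K (Icc 0 t))
    (hL : EntrywiseMeasurableBddOn L (Icc 0 t)) (v : ι → ℝ) :
    kernelConv K L t *ᵥ v = ∫ s in (0 : ℝ)..t, (K (t - s) * L s) *ᵥ v :=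
  of_intervalIntegral_mulVec
    (fun i j => ((hK.comp (by fun_prop) (mapsTo_sub_Icc t)).mul hL i j).intervalIntegrable ht) v

theorem conv_conv (ht : 0 ≤ t) (hK : EntrywiseMeasurableBddOn K (Icc 0 t))
    (hL : EntrywiseMeasurableBddOn L (Icc 0 t)) (hy : MeasurableBddOn y (Icc 0 t)) :
    conv K (conv L y) t = conv (kernelConv K L) y t := by
  have hF : MeasurableBddOn (uncurry fun s u => (K (t - s) * L (s - u)) *ᵥ y u)
      {p | 0 ≤ p.2 ∧ p.2 ≤ p.1 ∧ p.1 ≤ t} :=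
    ((hK.comp (by fun_prop) fun p hp => ⟨by linarith [hp.2.2], by linarith [hp.1, hp.2.1]⟩).mul
      (hL.comp (by fun_prop) fun p hp => ⟨by linarith [hp.2.1], by linarith [hp.1, hp.2.2]⟩)).mulVec
      (hy.comp measurable_snd fun p hp => ⟨hp.1, by linarith [hp.2.1, hp.2.2]⟩)
  have inner : ∀ s ∈ uIcc 0 t,
      K (t - s) *ᵥ conv L y s = ∫ u in (0 : ℝ)..s, (K (t - s) * L (s - u)) *ᵥ y u := by
    intro s hs
    rw [uIcc_of_le ht] at hs
    rw [conv, mulVec_intervalIntegral _ (intervalIntegrable_conv hs.1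
      (hL.mono (Icc_subset_Icc_right hs.2)) (hy.mono (Icc_subset_Icc_right hs.2)))]
    simp only [mulVec_mulVec]
  have outer : ∀ u ∈ uIcc 0 t,
      ∫ s in u..t, (K (t - s) * L (s - u)) *ᵥ y u = kernelConv K L (t - u) *ᵥ y u := by
    intro u hu
    rw [uIcc_of_le ht] at hu
    have hsub : Icc 0 (t - u) ⊆ Icc 0 t := Icc_subset_Icc_right (sub_le_self t hu.1)
    have h := intervalIntegral.integral_comp_add_right
      (fun s => (K (t - s) * L (s - u)) *ᵥ y u) u (a := 0) (b := t - u)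
    simp only [zero_add, sub_add_cancel, add_sub_cancel_right, sub_add_eq_sub_sub_swap] at h
    rw [kernelConv_mulVec (sub_nonneg.2 hu.2) (hK.mono hsub) (hL.mono hsub), h]
  calc conv K (conv L y) t
      = ∫ s in (0 : ℝ)..t, ∫ u in (0 : ℝ)..s, (K (t - s) * L (s - u)) *ᵥ y u :=
        intervalIntegral.integral_congr inner
    _ = ∫ u in (0 : ℝ)..t, ∫ s in u..t, (K (t - s) * L (s - u)) *ᵥ y u :=
        intervalIntegral_integral_swap_triangle ht hF
    _ = conv (kernelConv K L) y t := intervalIntegral.integral_congr outer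

theorem conv_eq_conv_of_resolvent (ht : 0 ≤ t) (hK : EntrywiseMeasurableBddOn K (Icc 0 t))
    (hL : EntrywiseMeasurableBddOn L (Icc 0 t)) (hy : MeasurableBddOn y (Icc 0 t))
    (hg : MeasurableBddOn g (Icc 0 t)) (hres : ∀ r ∈ Icc 0 t, kernelConv K L r + L r = K r)
    (hvol : ∀ s ∈ Icc 0 t, y s = conv L y s + g s) :
    conv L y t = conv K g t := by
  have hKy : conv K (conv L y) t = conv K y t - conv K g t := by
    rw [conv_congr ht (eqOn_refl K _) fun s hs => eq_sub_of_add_eq (hvol s hs).symm,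
      conv_sub_right ht hK hy hg]
  have hKLy : conv (kernelConv K L) y t = conv K y t - conv L y t := by
    rw [conv_congr ht (fun r hr => eq_sub_of_add_eq (hres r hr)) (eqOn_refl y _),
      conv_sub_left ht hK hL hy]
  have h := conv_conv ht hK hL hy
  rw [hKy, hKLy] at h
  exact (sub_right_inj.1 h).symm

end Volterra

theorem BoundedVariationOn.measurableBddOn_comp_projIcc {f : ℝ → ℝ} {a b : ℝ} (hab : a ≤ b)
    (hf : BoundedVariationOn f (Icc a b)) :
    MeasurableBddOn (fun x => f (projIcc a b hab x)) univ := by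
  obtain ⟨p, q, hp, hq, hpq⟩ := hf.locallyBoundedVariationOn.exists_monotoneOn_sub_monotoneOn
  have hmono : ∀ r : ℝ → ℝ, MonotoneOn r (Icc a b) → Monotone fun x => r (projIcc a b hab x) :=
    fun r hr x y hxy => hr (projIcc a b hab x).2 (projIcc a b hab y).2 (monotone_projIcc hab hxy)
  refine ⟨?_, |f a| + (eVariationOn f (Icc a b)).toReal, fun x _ => ?_⟩
  · rw [hpq]
    exact (hmono p hp).measurable.sub (hmono q hq).measurable
  · have h := hf.dist_le (projIcc a b hab x).2 (left_mem_Icc.2 hab)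
    rw [Real.dist_eq] at h
    rw [Real.norm_eq_abs]
    linarith [abs_sub_abs_le_abs_sub (f (projIcc a b hab x)) (f a)]

namespace RFDE

open Volterra

variable {ι : Type*} [Fintype ι] {ρ L L' : ℝ → Matrix ι ι ℝ} {φ : ℝ → ι → ℝ} {t : ℝ}

/-- The forcing term `f` of the Volterra equation `x = ζ∗x + f`. -/
noncomputable def forcing (L : ℝ → Matrix ι ι ℝ) (φ : ℝ → ι → ℝ) (t : ℝ) : ι → ℝ :=
  φ 0 + ∫ σ in (0 : ℝ)..1, (L (t + σ) - L σ) *ᵥ φ (-σ)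

noncomputable def solutionFormula (ρ L : ℝ → Matrix ι ι ℝ) (φ : ℝ → ι → ℝ) (t : ℝ) : ι → ℝ :=
  (φ 0 + ∫ τ in (0 : ℝ)..t, ρ τ *ᵥ φ 0)
    + ∫ σ in (0 : ℝ)..1,
        ((L (t + σ) - L σ) *ᵥ φ (-σ) + ∫ τ in (0 : ℝ)..t, (ρ τ * (L (t - τ + σ) - L σ)) *ᵥ φ (-σ))

theorem forcing_congr (ht : 0 ≤ t) (hL : EqOn L L' (Ici 0)) : forcing L φ t = forcing L' φ t := by
  refine congrArg (φ 0 + ·) (intervalIntegral.integral_congr fun σ hσ => ?_)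
  rw [uIcc_of_le zero_le_one] at hσ
  simp only [hL (add_nonneg ht hσ.1 : 0 ≤ t + σ), hL (hσ.1 : 0 ≤ σ)]

theorem solutionFormula_congr (ht : 0 ≤ t) (hL : EqOn L L' (Ici 0)) :
    solutionFormula ρ L φ t = solutionFormula ρ L' φ t := by
  unfold solutionFormula
  congr 1
  refine intervalIntegral.integral_congr fun σ hσ => ?_
  rw [uIcc_of_le zero_le_one] at hσ
  have hτ : ∀ τ ∈ uIcc 0 t, (ρ τ * (L (t - τ + σ) - L σ)) *ᵥ φ (-σ)
      = (ρ τ * (L' (t - τ + σ) - L' σ)) *ᵥ φ (-σ) := fun τ hτ => by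
    rw [uIcc_of_le ht] at hτ
    simp only [hL (add_nonneg (sub_nonneg.2 hτ.2) hσ.1 : 0 ≤ t - τ + σ), hL (hσ.1 : 0 ≤ σ)]
  rw [intervalIntegral.integral_congr hτ, hL (add_nonneg ht hσ.1 : 0 ≤ t + σ),
    hL (hσ.1 : 0 ≤ σ)]

theorem measurableBddOn_forcing_integrand (hL : EntrywiseMeasurableBddOn L univ)
    (hφ : MeasurableBddOn φ (Icc (-1) 0)) :
    MeasurableBddOn (uncurry fun s σ => (L (s + σ) - L σ) *ᵥ φ (-σ)) (univ ×ˢ Icc 0 1) :=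
  ((hL.comp (by fun_prop) (mapsTo_univ _ _)).sub (hL.comp measurable_snd (mapsTo_univ _ _))).mulVec
    (hφ.comp (by fun_prop) fun _ hp => ⟨neg_le_neg hp.2.2, neg_nonpos.2 hp.2.1⟩)

theorem measurableBddOn_forcing (hL : EntrywiseMeasurableBddOn L univ)
    (hφ : MeasurableBddOn φ (Icc (-1) 0)) : MeasurableBddOn (forcing L φ) univ :=
  (MeasurableBddOn.const _).add
    ((measurableBddOn_forcing_integrand hL hφ).intervalIntegral zero_le_one)

theorem forcing_add_conv_forcing (ht : 0 ≤ t) (hρ : EntrywiseMeasurableBddOn ρ (Icc 0 t))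
    (hL : EntrywiseMeasurableBddOn L univ) (hφ : MeasurableBddOn φ (Icc (-1) 0)) :
    forcing L φ t + conv ρ (forcing L φ) t = solutionFormula ρ L φ t := by
  set G : ℝ → ℝ → ι → ℝ := fun τ σ => (ρ τ * (L (t - τ + σ) - L σ)) *ᵥ φ (-σ)
  have hA := measurableBddOn_forcing_integrand hL hφ
  have hG : MeasurableBddOn (uncurry G) (Icc 0 t ×ˢ Icc 0 1) :=
    ((hρ.comp measurable_fst fun _ hp => hp.1).mul
      ((hL.comp (by fun_prop) (mapsTo_univ _ _)).sub
        (hL.comp measurable_snd (mapsTo_univ _ _)))).mulVec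
      (hφ.comp (by fun_prop) fun _ hp => ⟨neg_le_neg hp.2.2, neg_nonpos.2 hp.2.1⟩)
  have hconv : conv ρ (forcing L φ) t
      = (∫ τ in (0 : ℝ)..t, ρ τ *ᵥ φ 0) + ∫ σ in (0 : ℝ)..1, ∫ τ in (0 : ℝ)..t, G τ σ := by
    rw [conv_eq_integral_comp_sub, ← intervalIntegral_integral_swap_of_measurableBddOn ht
      zero_le_one hG, ← intervalIntegral.integral_add
      ((hρ.mulVec (.const _)).intervalIntegrable ht)
      ((hG.intervalIntegral zero_le_one).intervalIntegrable ht)]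
    refine intervalIntegral.integral_congr fun τ _ => ?_
    simp only [forcing, mulVec_add, G, mulVec_mulVec,
      mulVec_intervalIntegral _ ((hA.of_uncurry_left (mem_univ (t - τ))).intervalIntegrable
        zero_le_one)]
  rw [hconv, solutionFormula, forcing, intervalIntegral.integral_add
    ((hA.of_uncurry_left (mem_univ t)).intervalIntegrable zero_le_one)
    ((hG.uncurry_swap.intervalIntegral ht).intervalIntegrable zero_le_one)]
  abel

end RFDE

open Volterra RFDE

theorem rfde_solution_representation_general {n : ℕ}
    (ζ : ℝ → Matrix (Fin n) (Fin n) ℝ)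
    (hζbv : ∀ i j, BoundedVariationOn (fun t => ζ t i j) (Set.Icc 0 1))
    (hζone : ∀ τ : ℝ, 1 ≤ τ → ζ τ = ζ 1)
    (φ : ℝ → Fin n → ℝ) (hφm : Measurable φ)
    (Cφ : ℝ) (hφb : ∀ θ ∈ Set.Icc (-1:ℝ) 0, ‖φ θ‖ ≤ Cφ)
    -- the resolvent `ρ` of `ζ`, i.e. the unique solution of `ρ∗ζ + ζ = ρ = ζ∗ρ + ζ`
    (ρ : ℝ → Matrix (Fin n) (Fin n) ℝ)
    (hρm : ∀ i j, Measurable fun t => ρ t i j)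
    (hρb : ∀ T : ℝ, 0 < T → ∃ C : ℝ, ∀ t ∈ Set.Icc (0:ℝ) T, ∀ i j, |ρ t i j| ≤ C)
    (hρ1 : ∀ t : ℝ, 0 ≤ t →
      (Matrix.of fun i j => ∫ s in (0:ℝ)..t, ((ρ (t - s)) * (ζ s)) i j) + ζ t = ρ t)
    -- `x` is a locally bounded measurable solution of `x = ζ∗x + f`, `x = φ` on `[-1,0]`
    (x : ℝ → Fin n → ℝ) (hxm : Measurable x)
    (hxb : ∀ T : ℝ, 0 < T → ∃ C : ℝ, ∀ t ∈ Set.Icc (-1:ℝ) T, ‖x t‖ ≤ C)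
    (hxeq : ∀ t : ℝ, 0 ≤ t →
      x t = (∫ s in (0:ℝ)..t, (ζ (t - s)).mulVec (x s))
        + (φ 0 + ∫ σ in (0:ℝ)..1, (ζ (t + σ) - ζ σ).mulVec (φ (-σ)))) :
    -- then `x` is given by the explicit formula
    ∀ t : ℝ, 0 ≤ t →
      x t = (φ 0 + ∫ τ in (0:ℝ)..t, (ρ τ).mulVec (φ 0))
        + ∫ σ in (0:ℝ)..1,
            ((ζ (t + σ) - ζ σ).mulVec (φ (-σ))
              + ∫ τ in (0:ℝ)..t, ((ρ τ) * (ζ (t - τ + σ) - ζ σ)).mulVec (φ (-σ))) := by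
  intro t ht
  set ζc : ℝ → Matrix (Fin n) (Fin n) ℝ := fun s => ζ (projIcc 0 1 zero_le_one s)
  have hζc : EqOn ζc ζ (Ici 0) := fun s hs => by
    rcases le_total s 1 with h | h
    · simp only [ζc, projIcc_of_mem _ ⟨hs, h⟩]
    · simp only [ζc, projIcc_of_right_le _ h, hζone s h]
  have hζcB : EntrywiseMeasurableBddOn ζc univ := fun i j =>
    (hζbv i j).measurableBddOn_comp_projIcc zero_le_one
  have hρB : EntrywiseMeasurableBddOn ρ (Icc 0 t) := by
    obtain ⟨C, hC⟩ := hρb (t + 1) (by linarith)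
    exact fun i j => ⟨hρm i j, C, fun s hs => hC s ⟨hs.1, by linarith [hs.2]⟩ i j⟩
  have hxB : MeasurableBddOn x (Icc 0 t) := by
    obtain ⟨C, hC⟩ := hxb (t + 1) (by linarith)
    exact ⟨hxm, C, fun s hs => hC s ⟨by linarith [hs.1], by linarith [hs.2]⟩⟩
  have hφB : MeasurableBddOn φ (Icc (-1) 0) := ⟨hφm, Cφ, hφb⟩
  have hres : ∀ r ∈ Icc 0 t, kernelConv ρ ζc r + ζc r = ρ r := fun r hr => by
    rw [kernelConv_congr hr.1 (eqOn_refl ρ _) (hζc.mono Icc_subset_Ici_self), hζc hr.1]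
    exact hρ1 r hr.1
  have hvol : ∀ s ∈ Icc 0 t, x s = conv ζc x s + forcing ζc φ s := fun s hs => by
    rw [conv_congr hs.1 (hζc.mono Icc_subset_Ici_self) (eqOn_refl x _), forcing_congr hs.1 hζc]
    exact hxeq s hs.1
  have hkey : conv ζc x t = conv ρ (forcing ζc φ) t :=
    conv_eq_conv_of_resolvent ht hρB (hζcB.mono (subset_univ _)) hxB
      ((measurableBddOn_forcing hζcB hφB).mono (subset_univ _)) hres hvol
  calc x t = forcing ζc φ t + conv ρ (forcing ζc φ) t := by
        rw [hvol t ⟨ht, le_rfl⟩, hkey, add_comm]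
    _ = solutionFormula ρ ζc φ t := forcing_add_conv_forcing ht hρB hζcB hφB
    _ = solutionFormula ρ ζ φ t := solutionFormula_congr ht hζc

/-- Lemma 4.1 (Lemma 6.1) of Diekmann–Verduyn Lunel: explicit representation of the
solution of the retarded functional differential equation
`ẋ(t) = ∫_{[0,1]} dζ(σ) x(t−σ)`, `x = φ` on `[-1,0]`, written in the integrated
(Volterra) form `x = ζ∗x + f`, in terms of the resolvent `ρ` of the kernel `ζ`
(the unique solution of `ρ∗ζ + ζ = ρ = ζ∗ρ + ζ`). -/
theorem rfde_solution_representation {n : ℕ}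
    (ζ : ℝ → Matrix (Fin n) (Fin n) ℝ)
    (hζbv : ∀ i j, BoundedVariationOn (fun t => ζ t i j) (Set.Icc 0 1))
    (hζrc : ∀ t ∈ Set.Ioo (0:ℝ) 1, ∀ i j,
      ContinuousWithinAt (fun s => ζ s i j) (Set.Ici t) t)
    (hζzero : ζ 0 = 0)
    (hζone : ∀ τ : ℝ, 1 ≤ τ → ζ τ = ζ 1)
    (φ : ℝ → Fin n → ℝ) (hφm : Measurable φ)
    (Cφ : ℝ) (hφb : ∀ θ ∈ Set.Icc (-1:ℝ) 0, ‖φ θ‖ ≤ Cφ)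
    -- the resolvent `ρ` of `ζ`, i.e. the unique solution of `ρ∗ζ + ζ = ρ = ζ∗ρ + ζ`
    (ρ : ℝ → Matrix (Fin n) (Fin n) ℝ)
    (hρm : ∀ i j, Measurable fun t => ρ t i j)
    (hρb : ∀ T : ℝ, 0 < T → ∃ C : ℝ, ∀ t ∈ Set.Icc (0:ℝ) T, ∀ i j, |ρ t i j| ≤ C)
    (hρ1 : ∀ t : ℝ, 0 ≤ t →
      (Matrix.of fun i j => ∫ s in (0:ℝ)..t, ((ρ (t - s)) * (ζ s)) i j) + ζ t = ρ t)
    (hρ2 : ∀ t : ℝ, 0 ≤ t →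
      (Matrix.of fun i j => ∫ s in (0:ℝ)..t, ((ζ (t - s)) * (ρ s)) i j) + ζ t = ρ t)
    -- `x` is a locally bounded measurable solution of `x = ζ∗x + f`, `x = φ` on `[-1,0]`
    (x : ℝ → Fin n → ℝ) (hxm : Measurable x)
    (hxb : ∀ T : ℝ, 0 < T → ∃ C : ℝ, ∀ t ∈ Set.Icc (-1:ℝ) T, ‖x t‖ ≤ C)
    (hxinit : ∀ θ ∈ Set.Icc (-1:ℝ) 0, x θ = φ θ)
    (hxeq : ∀ t : ℝ, 0 ≤ t →
      x t = (∫ s in (0:ℝ)..t, (ζ (t - s)).mulVec (x s))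
        + (φ 0 + ∫ σ in (0:ℝ)..1, (ζ (t + σ) - ζ σ).mulVec (φ (-σ)))) :
    -- then `x` is given by the explicit formula
    ∀ t : ℝ, 0 ≤ t →
      x t = (φ 0 + ∫ τ in (0:ℝ)..t, (ρ τ).mulVec (φ 0))
        + ∫ σ in (0:ℝ)..1,
            ((ζ (t + σ) - ζ σ).mulVec (φ (-σ))
              + ∫ τ in (0:ℝ)..t, ((ρ τ) * (ζ (t - τ + σ) - ζ σ)).mulVec (φ (-σ))) :=
  rfde_solution_representation_general ζ hζbv hζone φ hφm Cφ hφb ρ hρm hρb hρ1 x hxm hxb hxeq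
end

section
/- Let L : ℝ → ℝ^{n×n} satisfy: L restricted to [0,1] has entries of bounded variation, right-continuous on (0,1), with L(0) = 0, and L(a) = 0 for a ≤ 0, L(a) = L(1) for a ≥ 1. Let ψ : ℝ → ℝⁿ be of normalized bounded variation on [-1,0] (right-continuous on (-1,0), ψ(0) = 0), extended by ψ(θ) = 0 for θ > 0 and ψ(θ) = ψ(-1) for θ < -1. Then for every t ≥ 0, ∫_{(t,1]} L(da) ψ(t−a) − ∫_{[0,1]} L(da) ψ(−a) = ∫_{[-1,0]} [ L(t−θ) − L(−θ) ] ψ(dθ), where the left-hand integrals are against the measure determined by L and the right-hand integral is against the vector measure determined by ψ. -/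
open MeasureTheory Set

/-!
With `L(x) = ∫_{a ≤ x} dL` and `ψ(x) = ∫_{θ ≤ x} dψ - ∫ dψ` (the constant comes from `ψ(0) = 0`),
both sides become the integral of `dL(a) dψ(θ)` over the strip `0 < a + θ ≤ t`: the left side
computed first in `θ`, the right side first in `a` (Fubini on the half-planes `a + θ ≤ t` and
`a + θ ≤ 0`).
-/

section ProdSection

variable {α β : Type*} [MeasurableSpace α] [MeasurableSpace β] {μ : Measure α} {ν : Measure β}
  {f : α → ℝ} {g : β → ℝ} {S : Set (α × β)}

theorem integral_indicator_mul_prodMk_left (hS : MeasurableSet S) (a : α) :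
    ∫ b, S.indicator (fun p => f p.1 * g p.2) (a, b) ∂ν = f a * ∫ b in Prod.mk a ⁻¹' S, g b ∂ν := by
  rw [← integral_const_mul, ← integral_indicator (measurable_prodMk_left hS)]
  exact integral_congr_ae (.of_forall fun b => (indicator_comp_right (Prod.mk a)).symm)

theorem integral_indicator_mul_prodMk_right (hS : MeasurableSet S) (b : β) :
    ∫ a, S.indicator (fun p => f p.1 * g p.2) (a, b) ∂μ
      = (∫ a in (·, b) ⁻¹' S, f a ∂μ) * g b := by
  rw [← integral_mul_const, ← integral_indicator (measurable_prodMk_right hS)]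
  exact integral_congr_ae (.of_forall fun a => (indicator_comp_right (·, b)).symm)

variable [SFinite ν]

theorem integrable_mul_setIntegral_prodMk_left (hS : MeasurableSet S) (hf : Integrable f μ)
    (hg : Integrable g ν) :
    Integrable (fun a => f a * ∫ b in Prod.mk a ⁻¹' S, g b ∂ν) μ := by
  simpa only [integral_indicator_mul_prodMk_left hS] using
    ((hf.mul_prod hg).indicator hS).integral_prod_left

theorem integrable_setIntegral_prodMk_right_mul [SFinite μ] (hS : MeasurableSet S)
    (hf : Integrable f μ) (hg : Integrable g ν) :
    Integrable (fun b => (∫ a in (·, b) ⁻¹' S, f a ∂μ) * g b) ν := by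
  simpa only [integral_indicator_mul_prodMk_right hS] using
    ((hf.mul_prod hg).indicator hS).integral_prod_right

theorem integral_mul_setIntegral_prodMk_comm [SFinite μ] (hS : MeasurableSet S)
    (hf : Integrable f μ) (hg : Integrable g ν) :
    ∫ a, f a * ∫ b in Prod.mk a ⁻¹' S, g b ∂ν ∂μ
      = ∫ b, (∫ a in (·, b) ⁻¹' S, f a ∂μ) * g b ∂ν := by
  have hF := (hf.mul_prod hg).indicator hS
  simp_rw [← integral_indicator_mul_prodMk_left hS, ← integral_indicator_mul_prodMk_right hS,
    ← integral_prod _ hF, integral_prod_symm _ hF]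

end ProdSection

section HalfPlane

theorem measurableSet_add_le (t : ℝ) : MeasurableSet {p : ℝ × ℝ | p.1 + p.2 ≤ t} :=
  measurableSet_le (by fun_prop) measurable_const

theorem prodMk_preimage_add_le (a t : ℝ) :
    Prod.mk a ⁻¹' {p : ℝ × ℝ | p.1 + p.2 ≤ t} = Iic (t - a) := by
  ext b; simp [le_sub_iff_add_le']

theorem prodMk_right_preimage_add_le (b t : ℝ) :
    (·, b) ⁻¹' {p : ℝ × ℝ | p.1 + p.2 ≤ t} = Iic (t - b) := by
  ext a; simp [le_sub_iff_add_le]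

variable {μ ν : Measure ℝ} [SFinite ν] {f g : ℝ → ℝ}

theorem integrable_mul_setIntegral_Iic_sub (hf : Integrable f μ) (hg : Integrable g ν) (t : ℝ) :
    Integrable (fun a => f a * ∫ b in Iic (t - a), g b ∂ν) μ := by
  simpa only [prodMk_preimage_add_le] using
    integrable_mul_setIntegral_prodMk_left (measurableSet_add_le t) hf hg

theorem integrable_setIntegral_Iic_sub_mul [SFinite μ] (hf : Integrable f μ) (hg : Integrable g ν)
    (t : ℝ) :
    Integrable (fun b => (∫ a in Iic (t - b), f a ∂μ) * g b) ν := by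
  simpa only [prodMk_right_preimage_add_le] using
    integrable_setIntegral_prodMk_right_mul (measurableSet_add_le t) hf hg

theorem integral_mul_setIntegral_Iic_sub_comm [SFinite μ] (hf : Integrable f μ)
    (hg : Integrable g ν) (t : ℝ) :
    ∫ a, f a * ∫ b in Iic (t - a), g b ∂ν ∂μ = ∫ b, (∫ a in Iic (t - b), f a ∂μ) * g b ∂ν := by
  simpa only [prodMk_preimage_add_le, prodMk_right_preimage_add_le] using
    integral_mul_setIntegral_prodMk_comm (measurableSet_add_le t) hf hg

end HalfPlane

section Support

variable {α E : Type*} [MeasurableSpace α] [NormedAddCommGroup E] [NormedSpace ℝ E]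
  {μ : Measure α} {f : α → E}

theorem setIntegral_inter_of_ae_mem {s t : Set α} (hs : ∀ᵐ a ∂μ, a ∈ s) (ht : MeasurableSet t) :
    ∫ a in s ∩ t, f a ∂μ = ∫ a in t, f a ∂μ := by
  rw [inter_comm, ← Measure.restrict_restrict ht, Measure.restrict_eq_self_of_ae_mem hs]

theorem setIntegral_Iic_of_ae_le [Preorder α] {x : α} (h : ∀ᵐ a ∂μ, a ≤ x) :
    ∫ a in Iic x, f a ∂μ = ∫ a, f a ∂μ := by
  rw [Measure.restrict_eq_self_of_ae_mem (s := Iic x) h]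

end Support

section Primitives

variable {b c : ℝ}

theorem eq_setIntegral_Iic_of_eq_setIntegral_Icc {μ : Measure ℝ} (hμ : ∀ᵐ a ∂μ, a ∈ Icc b c)
    (hbc : b ≤ c) {L f : ℝ → ℝ} (hL : ∀ x ∈ Icc b c, L x = ∫ a in Icc b x, f a ∂μ)
    (hLc : ∀ x, c ≤ x → L x = L c) (x : ℝ) (hx : b ≤ x) :
    L x = ∫ a in Iic x, f a ∂μ := by
  have hIic : ∀ y ∈ Icc b c, L y = ∫ a in Iic y, f a ∂μ := fun y hy => by
    rw [hL y hy, ← Ici_inter_Iic,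
      setIntegral_inter_of_ae_mem (s := Ici b) (hμ.mono fun a ha => ha.1) measurableSet_Iic]
  rcases le_or_gt x c with hxc | hxc
  · exact hIic x ⟨hx, hxc⟩
  · rw [hLc x hxc.le, hIic c ⟨hbc, le_rfl⟩, setIntegral_Iic_of_ae_le (hμ.mono fun a ha => ha.2),
      setIntegral_Iic_of_ae_le (hμ.mono fun a ha => ha.2.trans hxc.le)]

theorem eq_setIntegral_Iic_sub_integral_of_eq_add_setIntegral_Ioc {ν : Measure ℝ}
    (hν : ∀ᵐ θ ∂ν, θ ∈ Ioc b c) (hbc : b ≤ c) {ψ g : ℝ → ℝ} {k : ℝ}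
    (hψ : ∀ x ∈ Icc b c, ψ x = k + ∫ θ in Ioc b x, g θ ∂ν) (hψc : ψ c = 0) (x : ℝ)
    (hx : x ∈ Icc b c) :
    ψ x = ∫ θ in Iic x, g θ ∂ν - ∫ θ, g θ ∂ν := by
  have hIic : ∀ y ∈ Icc b c, ψ y = k + ∫ θ in Iic y, g θ ∂ν := fun y hy => by
    rw [hψ y hy, ← Ioi_inter_Iic,
      setIntegral_inter_of_ae_mem (s := Ioi b) (hν.mono fun θ hθ => hθ.1) measurableSet_Iic]
  have hk : k = -∫ θ, g θ ∂ν := by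
    have h := hIic c ⟨hbc, le_rfl⟩
    rw [hψc, setIntegral_Iic_of_ae_le (hν.mono fun θ hθ => hθ.2)] at h
    linarith
  rw [hIic x hx, hk, neg_add_eq_sub]

end Primitives

theorem renewal_forcing_identity_scalar {μ ν : Measure ℝ} [SFinite μ] [SFinite ν]
    (hμ : ∀ᵐ a ∂μ, a ∈ Icc 0 1) (hν : ∀ᵐ θ ∂ν, θ ∈ Icc (-1) 0)
    {f g : ℝ → ℝ} (hf : Integrable f μ) (hg : Integrable g ν) {L ψ : ℝ → ℝ}
    (hL : ∀ x, 0 ≤ x → L x = ∫ a in Iic x, f a ∂μ)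
    (hψ : ∀ x ∈ Icc (-1) 0, ψ x = ∫ θ in Iic x, g θ ∂ν - ∫ θ, g θ ∂ν) {t : ℝ} (ht : 0 ≤ t) :
    (∫ a in Ioc t 1, f a * ψ (t - a) ∂μ) - ∫ a in Icc 0 1, f a * ψ (-a) ∂μ
      = ∫ θ in Icc (-1) 0, (L (t - θ) - L (-θ)) * g θ ∂ν := by
  have hleft : ∫ a in Ioc t 1, f a * ψ (t - a) ∂μ
      = ∫ a, f a * ((∫ θ in Iic (t - a), g θ ∂ν) - ∫ θ, g θ ∂ν) ∂μ := by
    rw [setIntegral_congr_fun measurableSet_Ioc fun a ha => by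
      rw [hψ (t - a) ⟨by linarith [ha.2], by linarith [ha.1]⟩]]
    refine setIntegral_eq_integral_of_ae_compl_eq_zero (hμ.mono fun a ha hat => ?_)
    have hat : a ≤ t := not_lt.1 fun h => hat ⟨h, ha.2⟩
    rw [setIntegral_Iic_of_ae_le (hν.mono fun θ hθ => by linarith [hθ.2]), sub_self, mul_zero]
  have hright : ∫ a in Icc 0 1, f a * ψ (-a) ∂μ
      = ∫ a, f a * ((∫ θ in Iic (-a), g θ ∂ν) - ∫ θ, g θ ∂ν) ∂μ := by
    rw [setIntegral_congr_fun measurableSet_Icc fun a ha => by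
      rw [hψ (-a) ⟨by linarith [ha.2], by linarith [ha.1]⟩],
      Measure.restrict_eq_self_of_ae_mem hμ]
  have hrhs : ∫ θ in Icc (-1) 0, (L (t - θ) - L (-θ)) * g θ ∂ν
      = ∫ θ, ((∫ a in Iic (t - θ), f a ∂μ) - ∫ a in Iic (-θ), f a ∂μ) * g θ ∂ν := by
    rw [setIntegral_congr_fun measurableSet_Icc fun θ hθ => by
      rw [hL (t - θ) (by linarith [hθ.2]), hL (-θ) (by linarith [hθ.2])],
      Measure.restrict_eq_self_of_ae_mem hν]
  have hfG := integrable_mul_setIntegral_Iic_sub hf hg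
  have hFg := integrable_setIntegral_Iic_sub_mul hf hg
  have hfG₀ := hfG 0
  have hFg₀ := hFg 0
  have hcomm₀ := integral_mul_setIntegral_Iic_sub_comm hf hg 0
  simp only [zero_sub] at hfG₀ hFg₀ hcomm₀
  rw [hleft, hright, hrhs]
  simp_rw [mul_sub, sub_mul]
  rw [integral_sub (hfG t) (hf.mul_const _), integral_sub hfG₀ (hf.mul_const _),
    integral_sub (hFg t) hFg₀, integral_mul_setIntegral_Iic_sub_comm hf hg t, hcomm₀]
  ring

theorem neutral_renewal_forcing_identity_general {n : ℕ}
    (L : ℝ → Matrix (Fin n) (Fin n) ℝ)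
    (hLone : ∀ a : ℝ, 1 ≤ a → L a = L 1)
    -- representation of the measure `dL` on `[0,1]` (note `L(0) = 0`)
    (Lb : Measure ℝ) [IsFiniteMeasure Lb] (hLsupp : Lb ((Set.Icc (0:ℝ) 1)ᶜ) = 0)
    (Ld : ℝ → Fin n → Fin n → ℝ)
    (hLdi : ∀ i j, Integrable (fun σ => Ld σ i j) Lb)
    (hLlink : ∀ a ∈ Set.Icc (0:ℝ) 1, ∀ i j,
      L a i j = ∫ σ in Set.Icc (0:ℝ) a, Ld σ i j ∂Lb)
    -- `ψ`: normalized bounded variation on `[-1,0]`, with the stated extensions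
    (ψ : ℝ → Fin n → ℝ)
    (hψzero : ψ 0 = 0)
    -- representation of the vector measure `dψ` on `[-1,0]`
    (ψb : Measure ℝ) [IsFiniteMeasure ψb] (hψsupp : ψb ((Set.Ioc (-1:ℝ) 0)ᶜ) = 0)
    (ψd : ℝ → Fin n → ℝ) (hψdi : Integrable ψd ψb)
    (hψlink : ∀ θ ∈ Set.Icc (-1:ℝ) 0, ∀ i,
      ψ θ i = ψ (-1) i + ∫ s in Set.Ioc (-1:ℝ) θ, ψd s i ∂ψb) :
    ∀ t : ℝ, 0 ≤ t →
      ((fun i => ∑ k, ∫ a in Set.Ioc t 1, Ld a i k * ψ (t - a) k ∂Lb)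
          - fun i => ∑ k, ∫ a in Set.Icc (0:ℝ) 1, Ld a i k * ψ (-a) k ∂Lb)
        = fun i => ∑ k, ∫ θ in Set.Icc (-1:ℝ) 0,
            (L (t - θ) i k - L (-θ) i k) * ψd θ k ∂ψb := by
  intro t ht
  have hLb : ∀ᵐ a ∂Lb, a ∈ Icc (0:ℝ) 1 := ae_iff.2 hLsupp
  have hψb : ∀ᵐ θ ∂ψb, θ ∈ Ioc (-1:ℝ) 0 := ae_iff.2 hψsupp
  funext i
  simp only [Pi.sub_apply, ← Finset.sum_sub_distrib]
  refine Finset.sum_congr rfl fun k _ => ?_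
  exact renewal_forcing_identity_scalar hLb (hψb.mono fun _ h => Ioc_subset_Icc_self h)
    (hLdi i k) (hψdi.eval k)
    (eq_setIntegral_Iic_of_eq_setIntegral_Icc hLb zero_le_one (fun x hx => hLlink x hx i k)
      fun x hx => by rw [hLone x hx])
    (eq_setIntegral_Iic_sub_integral_of_eq_add_setIntegral_Ioc hψb (by norm_num)
      (fun x hx => hψlink x hx k) (congrFun hψzero k)) ht

/-- Lemmas 12.1 and 12.3 of Diekmann–Verduyn Lunel (integration by parts): for an NBV
kernel `L` on `[0,1]` (extended by `0` to the left and by `L(1)` to the right) and an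
NBV initial datum `ψ` on `[-1,0]` (normalized by `ψ(0) = 0`, extended by `0` to the
right and by `ψ(-1)` to the left),
`∫_{(t,1]} L(da) ψ(t−a) − ∫_{[0,1]} L(da) ψ(−a) = ∫_{[-1,0]} [L(t−θ) − L(−θ)] ψ(dθ)`
for all `t ≥ 0`.  The measures `dL` and `dψ` determined by `L` and `ψ` are represented
by base measures with densities. -/
theorem neutral_renewal_forcing_identity {n : ℕ}
    (L : ℝ → Matrix (Fin n) (Fin n) ℝ)
    (hLbv : ∀ i j, BoundedVariationOn (fun t => L t i j) (Set.Icc 0 1))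
    (hLrc : ∀ t ∈ Set.Ioo (0:ℝ) 1, ∀ i j,
      ContinuousWithinAt (fun s => L s i j) (Set.Ici t) t)
    (hLzero : L 0 = 0)
    (hLneg : ∀ a : ℝ, a ≤ 0 → L a = 0) (hLone : ∀ a : ℝ, 1 ≤ a → L a = L 1)
    -- representation of the measure `dL` on `[0,1]` (note `L(0) = 0`)
    (Lb : Measure ℝ) [IsFiniteMeasure Lb] (hLsupp : Lb ((Set.Icc (0:ℝ) 1)ᶜ) = 0)
    (Ld : ℝ → Fin n → Fin n → ℝ) (hLdm : ∀ i j, Measurable fun σ => Ld σ i j)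
    (hLdi : ∀ i j, Integrable (fun σ => Ld σ i j) Lb)
    (hLlink : ∀ a ∈ Set.Icc (0:ℝ) 1, ∀ i j,
      L a i j = ∫ σ in Set.Icc (0:ℝ) a, Ld σ i j ∂Lb)
    -- `ψ`: normalized bounded variation on `[-1,0]`, with the stated extensions
    (ψ : ℝ → Fin n → ℝ)
    (hψbv : ∀ i, BoundedVariationOn (fun θ => ψ θ i) (Set.Icc (-1) 0))
    (hψrc : ∀ θ ∈ Set.Ioo (-1:ℝ) 0, ContinuousWithinAt ψ (Set.Ici θ) θ)
    (hψzero : ψ 0 = 0)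
    (hψpos : ∀ θ : ℝ, 0 < θ → ψ θ = 0) (hψneg : ∀ θ : ℝ, θ < -1 → ψ θ = ψ (-1))
    -- representation of the vector measure `dψ` on `[-1,0]`
    (ψb : Measure ℝ) [IsFiniteMeasure ψb] (hψsupp : ψb ((Set.Ioc (-1:ℝ) 0)ᶜ) = 0)
    (ψd : ℝ → Fin n → ℝ) (hψdm : Measurable ψd) (hψdi : Integrable ψd ψb)
    (hψlink : ∀ θ ∈ Set.Icc (-1:ℝ) 0, ∀ i,
      ψ θ i = ψ (-1) i + ∫ s in Set.Ioc (-1:ℝ) θ, ψd s i ∂ψb) :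
    ∀ t : ℝ, 0 ≤ t →
      ((fun i => ∑ k, ∫ a in Set.Ioc t 1, Ld a i k * ψ (t - a) k ∂Lb)
          - fun i => ∑ k, ∫ a in Set.Icc (0:ℝ) 1, Ld a i k * ψ (-a) k ∂Lb)
        = fun i => ∑ k, ∫ θ in Set.Icc (-1:ℝ) 0,
            (L (t - θ) i k - L (-θ) i k) * ψd θ k ∂ψb :=
  neutral_renewal_forcing_identity_general L hLone Lb hLsupp Ld hLdi hLlink ψ hψzero ψb hψsupp ψd
    hψdi hψlink
end

section
/- Let μ be a complex Borel measure on [0,∞) of bounded total variation and let f : [0,∞) → ℂ be bounded and continuous, and set (μ ⋆ f)(t) = ∫_{[0,t]} f(t−s) μ(ds). Then: (i) if f(0) = 0, then μ ⋆ f is a bounded continuous function on [0,∞) with sup_t |(μ ⋆ f)(t)| ≤ ‖μ‖_{TV} · sup_t |f(t)|; (ii) if μ has no discrete part (no atoms), then μ ⋆ f is a bounded continuous function on [0,∞) with the same bound, without assuming f(0) = 0. -/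
/-!
With `H := (Ici 0).indicator f`, the truncated convolution is `t ↦ ∫_{[0,∞)} H (t - s) dens s dμ`,
so dominated convergence (dominating function `C ‖dens‖`) makes it continuous at `t` as soon as `H`
is continuous at `t - s` for a.e. `s`. `H` is continuous away from `0`, and at `0` when `f 0 = 0`;
so the only obstruction is an atom of `μ` at `t` where `f 0 ≠ 0`, excluded by either hypothesis.
-/

open MeasureTheory Filter Topology Set

theorem continuousAt_indicator_Ici_self {α E : Type*} [TopologicalSpace α] [LinearOrder α]
    [OrderTopology α] [Zero E] [TopologicalSpace E] {f : α → E} {a : α}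
    (hf : ContinuousWithinAt f (Ici a) a) (ha : f a = 0) :
    ContinuousAt ((Ici a).indicator f) a := by
  have hval : (Ici a).indicator f a = 0 := by simp [ha]
  refine continuousAt_iff_continuous_left_right.2 ⟨?_, ?_⟩
  · refine (continuousWithinAt_const (b := (0 : E))).congr (fun x hx => ?_) hval
    rcases hx.lt_or_eq with hx | rfl
    · exact indicator_of_notMem (not_le.2 hx) f
    · exact hval
  · exact hf.congr (fun x hx => indicator_of_mem hx f) (indicator_of_mem le_rfl f)

theorem ContinuousOn.continuousAt_indicator_Ici {E : Type*} [Zero E] [TopologicalSpace E]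
    {f : ℝ → E} {a x : ℝ} (hf : ContinuousOn f (Ici a)) (hx : x ≠ a ∨ f a = 0) :
    ContinuousAt ((Ici a).indicator f) x := by
  by_cases hxa : x = a
  · subst hxa
    exact continuousAt_indicator_Ici_self (hf x self_mem_Ici) (hx.resolve_left (not_not.2 rfl))
  · exact (hf.mono interior_subset).continuousAt_indicator (by simpa [frontier_Ici] using hxa)

theorem eq_zero_or_measure_singleton_eq_zero_of_setIntegral_singleton {α E : Type*}
    [MeasurableSpace α] [MeasurableSingletonClass α] [NormedAddCommGroup E] [NormedSpace ℝ E]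
    [CompleteSpace E]
    {μ : Measure α} {f : α → E} (hf : Integrable f μ) {x : α}
    (h : ∫ s in {x}, f s ∂μ = 0) : f x = 0 ∨ μ {x} = 0 := by
  -- `μ.real {x} = 0` also when `μ {x} = ∞`; integrability then forces `f x = 0`.
  rw [integral_singleton, smul_eq_zero, measureReal_def, ENNReal.toReal_eq_zero_iff] at h
  rcases h with (h | h) | h
  · exact Or.inr h
  · have := (integrableOn_singleton_iff (f := f) (μ := μ)).1 hf.integrableOn
    simpa [h] using this
  · exact Or.inl h

theorem norm_setIntegral_mul_le {α : Type*} [MeasurableSpace α] {μ : Measure α} {S : Set α}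
    (hS : MeasurableSet S) {φ dens : α → ℂ} {C : ℝ} (hdens : Integrable dens μ) (hC : 0 ≤ C)
    (hφ : ∀ x ∈ S, ‖φ x‖ ≤ C) :
    ‖∫ x in S, φ x * dens x ∂μ‖ ≤ (∫ x, ‖dens x‖ ∂μ) * C := by
  have hbound : Integrable (fun x => C * ‖dens x‖) μ := hdens.norm.const_mul C
  calc ‖∫ x in S, φ x * dens x ∂μ‖
      ≤ ∫ x in S, C * ‖dens x‖ ∂μ := by
        refine norm_integral_le_of_norm_le hbound.integrableOn ?_
        filter_upwards [ae_restrict_mem hS] with x hx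
        rw [norm_mul]
        exact mul_le_mul_of_nonneg_right (hφ x hx) (norm_nonneg _)
    _ ≤ ∫ x, C * ‖dens x‖ ∂μ :=
        setIntegral_le_integral hbound (Eventually.of_forall fun x => by positivity)
    _ = (∫ x, ‖dens x‖ ∂μ) * C := by rw [integral_const_mul, mul_comm]

theorem continuousAt_integral_comp_sub_mul {μ : Measure ℝ} {H dens : ℝ → ℂ} {C t : ℝ}
    (hdens : Integrable dens μ) (hH : Measurable H) (hHC : ∀ x, ‖H x‖ ≤ C)
    (hcont : ∀ᵐ s ∂μ, ContinuousAt H (t - s) ∨ dens s = 0) :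
    ContinuousAt (fun u => ∫ s, H (u - s) * dens s ∂μ) t := by
  refine continuousAt_of_dominated (bound := fun s => C * ‖dens s‖) ?_ ?_
    (hdens.norm.const_mul C) ?_
  · exact Eventually.of_forall fun u =>
      ((hH.comp (measurable_const.sub measurable_id)).aestronglyMeasurable.mul
        hdens.aestronglyMeasurable)
  · refine Eventually.of_forall fun u => Eventually.of_forall fun s => ?_
    rw [norm_mul]
    exact mul_le_mul_of_nonneg_right (hHC _) (norm_nonneg _)
  · filter_upwards [hcont] with s hs
    rcases hs with hs | hs
    · exact (ContinuousAt.comp (f := fun u => u - s) hs (continuous_sub_right s).continuousAt).mul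
        continuousAt_const
    · simp only [hs, mul_zero]
      exact continuousAt_const

theorem setIntegral_Icc_comp_sub_mul_eq (μ : Measure ℝ) (f dens : ℝ → ℂ) (t : ℝ) :
    ∫ s in Icc 0 t, f (t - s) * dens s ∂μ
      = ∫ s in Ici 0, (Ici 0).indicator f (t - s) * dens s ∂μ := by
  have hind : ∀ s, (Ici 0).indicator f (t - s) * dens s
      = (Iic t).indicator (fun s => f (t - s) * dens s) s := by
    intro s
    by_cases hs : s ≤ t
    · simp [hs, sub_nonneg.2 hs]
    · simp [hs, sub_nonneg]
  simp_rw [hind, setIntegral_indicator measurableSet_Iic, Ici_inter_Iic]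

theorem continuous_setIntegral_Icc_comp_sub_mul {μ : Measure ℝ} {f dens : ℝ → ℂ} {C : ℝ}
    (hdens : Integrable dens μ) (hf : ContinuousOn f (Ici 0)) (hfC : ∀ x ∈ Ici 0, ‖f x‖ ≤ C)
    (hatom : ∀ t, f 0 * dens t = 0 ∨ μ {t} = 0) :
    Continuous (fun t => ∫ s in Icc 0 t, f (t - s) * dens s ∂μ) := by
  classical
  have hC : 0 ≤ C := (norm_nonneg _).trans (hfC 0 self_mem_Ici)
  have hHm : Measurable ((Ici (0 : ℝ)).indicator f) := by
    rw [← piecewise_eq_indicator]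
    exact hf.measurable_piecewise continuousOn_const measurableSet_Ici
  have hHC : ∀ x, ‖(Ici (0 : ℝ)).indicator f x‖ ≤ C := by
    intro x
    by_cases hx : x ∈ Ici (0 : ℝ)
    · simpa [indicator_of_mem hx] using hfC x hx
    · simpa [indicator_of_notMem hx] using hC
  simp_rw [setIntegral_Icc_comp_sub_mul_eq]
  refine continuous_iff_continuousAt.2 fun t =>
    continuousAt_integral_comp_sub_mul hdens.restrict hHm hHC ?_
  rcases hatom t with h | h
  · refine Eventually.of_forall fun s => ?_
    by_cases hst : s = t
    · subst hst
      rcases mul_eq_zero.1 h with h | h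
      · exact Or.inl (hf.continuousAt_indicator_Ici (Or.inr (by simpa using h)))
      · exact Or.inr h
    · exact Or.inl (hf.continuousAt_indicator_Ici (Or.inl (sub_ne_zero.2 (Ne.symm hst))))
  · have : ∀ᵐ s ∂μ, s ≠ t := compl_mem_ae_iff.2 h
    filter_upwards [ae_restrict_of_ae this] with s hs
    exact Or.inl (hf.continuousAt_indicator_Ici (Or.inl (sub_ne_zero.2 (Ne.symm hs))))

theorem convolution_measure_continuous_general
    (base : Measure ℝ)
    (dens : ℝ → ℂ) (hdi : Integrable dens base)
    (f : ℝ → ℂ) (hfc : ContinuousOn f (Set.Ici 0))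
    (C : ℝ) (hfb : ∀ t ∈ Set.Ici (0:ℝ), ‖f t‖ ≤ C)
    (g : ℝ → ℂ) (hg : ∀ t : ℝ, g t = ∫ s in Set.Icc (0:ℝ) t, f (t - s) * dens s ∂base) :
    (f 0 = 0 →
      ContinuousOn g (Set.Ici 0) ∧
        ∀ t ∈ Set.Ici (0:ℝ), ‖g t‖ ≤ (∫ s, ‖dens s‖ ∂base) * C)
    ∧ ((∀ x : ℝ, (∫ s in ({x} : Set ℝ), dens s ∂base) = 0) →
      ContinuousOn g (Set.Ici 0) ∧
        ∀ t ∈ Set.Ici (0:ℝ), ‖g t‖ ≤ (∫ s, ‖dens s‖ ∂base) * C) := by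
  have hbound : ∀ t ∈ Ici (0 : ℝ), ‖g t‖ ≤ (∫ s, ‖dens s‖ ∂base) * C := fun t _ => by
    rw [hg t]
    exact norm_setIntegral_mul_le measurableSet_Icc hdi ((norm_nonneg _).trans
      (hfb 0 self_mem_Ici)) fun s hs => hfb (t - s) (sub_nonneg.2 hs.2)
  have hcont (hatom : ∀ t, f 0 * dens t = 0 ∨ base {t} = 0) : ContinuousOn g (Ici 0) := by
    rw [funext hg]
    exact (continuous_setIntegral_Icc_comp_sub_mul hdi hfc hfb hatom).continuousOn
  refine ⟨fun hf0 => ⟨hcont fun t => Or.inl (by simp [hf0]), hbound⟩,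
    fun hatom => ⟨hcont fun t => ?_, hbound⟩⟩
  exact (eq_zero_or_measure_singleton_eq_zero_of_setIntegral_singleton hdi (hatom t)).imp_left
    fun h => by simp [h]

/-- Theorem A.8 of Diekmann–Verduyn Lunel: for a bounded complex Borel measure `μ` on
`[0,∞)` (represented by a base measure and a density) and a bounded continuous
`f : [0,∞) → ℂ`, the convolution `(μ ⋆ f)(t) = ∫_{[0,t]} f(t−s) μ(ds)` is bounded and
continuous with `sup |μ ⋆ f| ≤ ‖μ‖_{TV} sup |f|`, provided either (i) `f(0) = 0`, or
(ii) `μ` has no discrete part (no atoms). -/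
theorem convolution_measure_continuous
    (base : Measure ℝ) [IsFiniteMeasure base] (hsupp : base (Set.Iio (0:ℝ)) = 0)
    (dens : ℝ → ℂ) (hdm : Measurable dens) (hdi : Integrable dens base)
    (f : ℝ → ℂ) (hfc : ContinuousOn f (Set.Ici 0))
    (C : ℝ) (hfb : ∀ t ∈ Set.Ici (0:ℝ), ‖f t‖ ≤ C)
    (g : ℝ → ℂ) (hg : ∀ t : ℝ, g t = ∫ s in Set.Icc (0:ℝ) t, f (t - s) * dens s ∂base) :
    (f 0 = 0 →
      ContinuousOn g (Set.Ici 0) ∧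
        ∀ t ∈ Set.Ici (0:ℝ), ‖g t‖ ≤ (∫ s, ‖dens s‖ ∂base) * C)
    ∧ ((∀ x : ℝ, (∫ s in ({x} : Set ℝ), dens s ∂base) = 0) →
      ContinuousOn g (Set.Ici 0) ∧
        ∀ t ∈ Set.Ici (0:ℝ), ‖g t‖ ≤ (∫ s, ‖dens s‖ ∂base) * C) :=
  convolution_measure_continuous_general base dens hdi f hfc C hfb g hg
end

section
/- Let μ be a ℂ^{n×n}-valued local Borel measure on [0,∞) with det[ I − μ({0}) ] ≠ 0, and let ρ be its resolvent, i.e., the unique local measure with ρ − μ ∗ ρ = μ = ρ − ρ ∗ μ. Suppose there exists γ > 0 such that the exponentially weighted measure μ^γ, defined by μ^γ(E) = ∫ χ_E(s) e^{−γs} μ(ds), has finite total variation on [0,∞). Then there exists α ≥ γ such that ρ^α, defined analogously by ρ^α(E) = ∫ χ_E(s) e^{−αs} ρ(ds), has finite total variation on [0,∞). -/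
open MeasureTheory Filter Topology

/-- A `ℂ^{n×n}`-valued local Borel measure on `[0,∞)`: countably additive on bounded
Borel sets with finite total variation on compacts.  It is represented by a positive
base measure together with a locally integrable matrix-valued density. -/
structure LocalMatrixMeasure (n : ℕ) where
  base : MeasureTheory.Measure ℝ
  dens : ℝ → Fin n → Fin n → ℂ
  meas : ∀ i j, Measurable fun t => dens t i j
  locInt : ∀ T : ℝ, ∀ i j, MeasureTheory.IntegrableOn (fun t => dens t i j) (Set.Icc 0 T) base
  supp : base (Set.Iio 0) = 0

namespace LocalMatrixMeasure

/-- The value `μ(E)` of the matrix measure on a Borel set `E`. -/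
noncomputable def val {n : ℕ} (μ : LocalMatrixMeasure n) (E : Set ℝ) :
    Matrix (Fin n) (Fin n) ℂ :=
  Matrix.of fun i j => ∫ t in E, μ.dens t i j ∂μ.base

/-- The half-line convolution of two matrix measures:
`(μ ∗ ν)(E) = ∫_{[0,∞)} μ(ds) ν((E−s) ∩ [0,∞))`. -/
noncomputable def conv {n : ℕ} (μ ν : LocalMatrixMeasure n) (E : Set ℝ) :
    Matrix (Fin n) (Fin n) ℂ :=
  Matrix.of fun i j => ∑ k, ∫ s in Set.Ici (0:ℝ),
    μ.dens s i k * ν.val ((· + s) ⁻¹' E ∩ Set.Ici 0) k j ∂μ.base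

/-- `ρ` is the resolvent of `μ`: `ρ − μ ∗ ρ = μ = ρ − ρ ∗ μ` (as an identity of local
measures, i.e. on every bounded Borel set). -/
def IsResolvent {n : ℕ} (μ ρ : LocalMatrixMeasure n) : Prop :=
  ∀ E : Set ℝ, MeasurableSet E → Bornology.IsBounded E →
    ρ.val E - μ.conv ρ E = μ.val E ∧ ρ.val E - ρ.conv μ E = μ.val E

end LocalMatrixMeasure

/-! Test the resolvent identity `ρ = μ + μ ∗ ρ`, in column `j`, against
`f(t) = 1_{[0,T]}(t) e^{-αt} conj ρᵢⱼ(t) / |ρᵢⱼ(t)|`; this needs the identity for bounded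
measurable test functions, which follows from the one for bounded Borel sets by simple-function
approximation and dominated convergence. Separating the atom `μ({0})` and inverting `I − μ({0})`
gives, for `vₖ = |ρₖⱼ|^α([0,T])` and `B = (I − μ({0}))⁻¹`,
`vᵢ ≤ ∑ₚ |Bᵢₚ| (|μₚⱼ|^α([0,∞)) + ∑ₖ |μₚₖ|^α((0,∞)) vₖ)`.
Since `|μₚₖ|^α((0,∞)) → 0` as `α → ∞`, for large `α` this bounds `∑ₖ vₖ` independently of `T`,
and letting `T → ∞` shows that `|ρᵢⱼ|^α` is finite. -/

open Set
open scoped Matrix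

theorem Complex.conj_div_norm_mul_self (z : ℂ) : starRingEnd ℂ z / ‖z‖ * z = ‖z‖ := by
  rcases eq_or_ne z 0 with rfl | hz
  · simp
  have hz' : (‖z‖ : ℂ) ≠ 0 := by simpa using hz
  rw [div_mul_eq_mul_div, RCLike.conj_mul, div_eq_iff hz', sq]
  rfl

theorem Complex.norm_conj_div_norm_le_one (z : ℂ) : ‖starRingEnd ℂ z / ‖z‖‖ ≤ 1 := by
  rw [norm_div, Complex.norm_conj, Complex.norm_real, norm_norm]
  exact div_self_le_one _

theorem Matrix.eq_inv_mulVec_of_eq_add_mulVec {ι K : Type*} [Fintype ι] [DecidableEq ι]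
    [CommRing K] {A : Matrix ι ι K} (hA : IsUnit (1 - A).det) {x b : ι → K}
    (h : x = b + A *ᵥ x) : x = (1 - A)⁻¹ *ᵥ b := by
  have hb : b = (1 - A) *ᵥ x := by
    rw [Matrix.sub_mulVec, Matrix.one_mulVec, eq_sub_iff_add_eq, ← h]
  rw [hb, Matrix.mulVec_mulVec, Matrix.nonsing_inv_mul _ hA, Matrix.one_mulVec]

theorem sum_le_two_mul_of_le_mul_add {ι : Type*} [Fintype ι] {b m : ι → ι → ℝ} {K v : ι → ℝ}
    (hb : ∀ i p, 0 ≤ b i p) (hm : ∀ p k, 0 ≤ m p k) (hv : ∀ k, 0 ≤ v k)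
    (h : ∀ i, v i ≤ ∑ p, b i p * (K p + ∑ k, m p k * v k))
    (hε : ∑ i, ∑ p, b i p * ∑ k, m p k ≤ 1 / 2) :
    ∑ i, v i ≤ 2 * ∑ i, ∑ p, b i p * K p := by
  set W := ∑ i, v i
  have hW : 0 ≤ W := Finset.sum_nonneg fun k _ => hv k
  have hvW : ∀ k, v k ≤ W := fun k => Finset.single_le_sum (fun k _ => hv k) (Finset.mem_univ k)
  have hrec : W ≤ ∑ i, ∑ p, b i p * K p + (∑ i, ∑ p, b i p * ∑ k, m p k) * W :=
    calc W ≤ ∑ i, ∑ p, b i p * (K p + ∑ k, m p k * v k) := Finset.sum_le_sum fun i _ => h i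
      _ ≤ ∑ i, ∑ p, b i p * (K p + ∑ k, m p k * W) := by
        gcongr with i _ p _ k _
        · exact hb i p
        · exact hm p k
        · exact hvW k
      _ = _ := by simp only [mul_add, Finset.sum_add_distrib, Finset.sum_mul, mul_assoc]
  nlinarith [mul_le_mul_of_nonneg_right hε hW]

/-- The base measure `P` need not be s-finite, so Fubini's measurability statement is applied on a
σ-finite set carrying the integrable factor `h`. -/
theorem stronglyMeasurable_integral_mul_of_integrable {α β : Type*} [MeasurableSpace α]
    [MeasurableSpace β] {P : Measure α} {F : β → α → ℂ}
    (hF : StronglyMeasurable (Function.uncurry F)) {h : α → ℂ} (hh : Integrable h P)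
    (hhm : StronglyMeasurable h) :
    StronglyMeasurable (fun y => ∫ x, F y x * h x ∂P) := by
  set S := hh.aefinStronglyMeasurable.sigmaFiniteSet
  have h_compl : ∀ᵐ x ∂P, x ∉ S → h x = 0 :=
    (ae_restrict_iff' hh.aefinStronglyMeasurable.measurableSet.compl).1
      hh.aefinStronglyMeasurable.ae_eq_zero_compl
  have hS : (fun y => ∫ x, F y x * h x ∂P) = fun y => ∫ x in S, F y x * h x ∂P := by
    ext y
    refine (setIntegral_eq_integral_of_ae_compl_eq_zero ?_).symm
    filter_upwards [h_compl] with x hx hxS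
    rw [hx hxS, mul_zero]
  rw [hS]
  exact (hF.mul (hhm.comp_measurable measurable_snd)).integral_prod_right'

namespace LocalMatrixMeasure

variable {n : ℕ}

/-- `σ.pairing w i j = ∫ w dσᵢⱼ`. -/
noncomputable def pairing (σ : LocalMatrixMeasure n) (w : ℝ → ℂ) (i j : Fin n) : ℂ :=
  ∫ t, w t * σ.dens t i j ∂σ.base

noncomputable def shiftedPairing (σ : LocalMatrixMeasure n) (w : ℝ → ℂ) (i j : Fin n)
    (s : ℝ) : ℂ :=
  σ.pairing (fun t => w (t + s)) i j

structure IsTestFunction (T M : ℝ) (w : ℝ → ℂ) : Prop where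
  measurable : Measurable w
  norm_le : ∀ t, ‖w t‖ ≤ M
  eq_zero_of_lt : ∀ t, T < t → w t = 0

theorem IsTestFunction.comp_add {T M s : ℝ} {w : ℝ → ℂ} (hw : IsTestFunction T M w)
    (hs : 0 ≤ s) : IsTestFunction T M (fun t => w (t + s)) where
  measurable := hw.measurable.comp (measurable_add_const s)
  norm_le t := hw.norm_le (t + s)
  eq_zero_of_lt t ht := hw.eq_zero_of_lt _ (by linarith)

theorem IsTestFunction.indicator_Icc {T M : ℝ} {f : ℝ → ℂ} (hf : Measurable f)
    (hM : ∀ t, ‖f t‖ ≤ M) : IsTestFunction T M ((Icc 0 T).indicator f) where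
  measurable := hf.indicator measurableSet_Icc
  norm_le t := by
    by_cases ht : t ∈ Icc 0 T
    · simpa only [indicator_of_mem ht] using hM t
    · simpa only [indicator_of_notMem ht, norm_zero] using (norm_nonneg _).trans (hM t)
  eq_zero_of_lt t ht := indicator_of_notMem (fun h => (not_le.2 ht) h.2) f

variable (σ : LocalMatrixMeasure n)

theorem ae_nonneg : ∀ᵐ t ∂σ.base, 0 ≤ t := by
  rw [ae_iff]
  simpa only [not_le, Iio] using σ.supp

theorem restrict_Ici : σ.base.restrict (Ici 0) = σ.base :=
  Measure.restrict_eq_self_of_ae_mem σ.ae_nonneg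

section Pairing

variable {T M : ℝ} {w w₁ w₂ : ℝ → ℂ} {i j : Fin n}

theorem norm_mul_dens_le (hM : ∀ t, 0 ≤ t → ‖w t‖ ≤ M) (hT : ∀ t, T < t → w t = 0) :
    ∀ᵐ t ∂σ.base, ‖w t * σ.dens t i j‖ ≤ (Icc 0 T).indicator (fun t => M * ‖σ.dens t i j‖) t := by
  filter_upwards [σ.ae_nonneg] with t ht
  by_cases htT : t ≤ T
  · rw [indicator_of_mem (show t ∈ Icc 0 T from ⟨ht, htT⟩), norm_mul]
    exact mul_le_mul_of_nonneg_right (hM t ht) (norm_nonneg _)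
  · rw [hT t (not_le.1 htT), zero_mul, norm_zero, indicator_of_notMem (fun h => htT h.2)]

theorem integrable_indicator_mul_norm_dens (T M : ℝ) (i j : Fin n) :
    Integrable ((Icc 0 T).indicator (fun t => M * ‖σ.dens t i j‖)) σ.base :=
  (integrable_indicator_iff measurableSet_Icc).2 ((σ.locInt T i j).norm.const_mul M)

theorem integrable_mul_dens (hw : AEStronglyMeasurable w σ.base)
    (hM : ∀ t, 0 ≤ t → ‖w t‖ ≤ M) (hT : ∀ t, T < t → w t = 0) :
    Integrable (fun t => w t * σ.dens t i j) σ.base :=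
  (σ.integrable_indicator_mul_norm_dens T M i j).mono'
    (hw.mul (σ.meas i j).aestronglyMeasurable) (σ.norm_mul_dens_le hM hT)

theorem IsTestFunction.integrable_mul_dens (hw : IsTestFunction T M w) :
    Integrable (fun t => w t * σ.dens t i j) σ.base :=
  σ.integrable_mul_dens hw.measurable.aestronglyMeasurable (fun t _ => hw.norm_le t)
    hw.eq_zero_of_lt

theorem norm_pairing_le (hM : ∀ t, 0 ≤ t → ‖w t‖ ≤ M) (hT : ∀ t, T < t → w t = 0) :
    ‖σ.pairing w i j‖ ≤ M * ∫ t in Icc 0 T, ‖σ.dens t i j‖ ∂σ.base := by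
  refine (norm_integral_le_of_norm_le (σ.integrable_indicator_mul_norm_dens T M i j)
    (σ.norm_mul_dens_le hM hT)).trans_eq ?_
  rw [integral_indicator measurableSet_Icc, integral_const_mul]

theorem tendsto_pairing {w : ℕ → ℝ → ℂ} {w₀ : ℝ → ℂ}
    (hw : ∀ m, AEStronglyMeasurable (w m) σ.base) (hM : ∀ m t, 0 ≤ t → ‖w m t‖ ≤ M)
    (hT : ∀ m t, T < t → w m t = 0) (hlim : ∀ t, 0 ≤ t → Tendsto (w · t) atTop (𝓝 (w₀ t))) :
    Tendsto (fun m => σ.pairing (w m) i j) atTop (𝓝 (σ.pairing w₀ i j)) := by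
  refine tendsto_integral_of_dominated_convergence _
    (fun m => (hw m).mul (σ.meas i j).aestronglyMeasurable)
    (σ.integrable_indicator_mul_norm_dens T M i j)
    (fun m => σ.norm_mul_dens_le (hM m) (hT m)) ?_
  filter_upwards [σ.ae_nonneg] with t ht
  exact (hlim t ht).mul_const _

theorem tendsto_pairing_of_isTestFunction {w : ℕ → ℝ → ℂ} {w₀ : ℝ → ℂ}
    (hw : ∀ m, IsTestFunction T M (w m))
    (hlim : ∀ t, 0 ≤ t → Tendsto (w · t) atTop (𝓝 (w₀ t))) :
    Tendsto (fun m => σ.pairing (w m) i j) atTop (𝓝 (σ.pairing w₀ i j)) :=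
  σ.tendsto_pairing (fun m => (hw m).measurable.aestronglyMeasurable)
    (fun m t _ => (hw m).norm_le t) (fun m => (hw m).eq_zero_of_lt) hlim

theorem pairing_congr_nonneg (h : ∀ t, 0 ≤ t → w₁ t = w₂ t) :
    σ.pairing w₁ i j = σ.pairing w₂ i j := by
  refine integral_congr_ae ?_
  filter_upwards [σ.ae_nonneg] with t ht
  rw [h t ht]

theorem pairing_const_mul (c : ℂ) : σ.pairing (fun t => c * w t) i j = c * σ.pairing w i j := by
  simp only [pairing, mul_assoc, integral_const_mul]

theorem pairing_add (h₁ : Integrable (fun t => w₁ t * σ.dens t i j) σ.base)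
    (h₂ : Integrable (fun t => w₂ t * σ.dens t i j) σ.base) :
    σ.pairing (w₁ + w₂) i j = σ.pairing w₁ i j + σ.pairing w₂ i j := by
  simp only [pairing, Pi.add_apply, add_mul, integral_add h₁ h₂]

theorem pairing_indicator_one {E : Set ℝ} (hE : MeasurableSet E) :
    σ.pairing (E.indicator 1) i j = σ.val E i j := by
  refine (integral_congr_ae (ae_of_all _ fun t => ?_)).trans (integral_indicator hE)
  by_cases ht : t ∈ E <;> simp [ht]

theorem pairing_eq_atom_add (hw : Integrable (fun t => w t * σ.dens t i j) σ.base) :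
    σ.pairing w i j = σ.val {0} i j * w 0 + σ.pairing ((Ioi 0).indicator w) i j := by
  have hind : ∀ {S : Set ℝ}, MeasurableSet S →
      Integrable (fun t => S.indicator w t * σ.dens t i j) σ.base := fun hS =>
    (hw.indicator hS).congr (.of_forall fun _ => indicator_mul_left _ _ _)
  have hsplit : σ.pairing w i j
      = σ.pairing (({0} : Set ℝ).indicator w + (Ioi 0).indicator w) i j := by
    refine σ.pairing_congr_nonneg fun t ht => ?_
    rcases ht.eq_or_lt with rfl | ht
    · simp
    · simp [ht, ht.ne']
  have hatom : σ.pairing (({0} : Set ℝ).indicator w) i j = σ.val {0} i j * w 0 := by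
    rw [pairing, val, Matrix.of_apply, mul_comm, ← integral_const_mul,
      ← integral_indicator (measurableSet_singleton 0)]
    refine integral_congr_ae (ae_of_all _ fun t => ?_)
    by_cases ht : t = 0 <;> simp [ht]
  rw [hsplit, σ.pairing_add (hind (measurableSet_singleton 0)) (hind measurableSet_Ioi), hatom]

end Pairing

section Shift

variable (μ ρ : LocalMatrixMeasure n) {T M : ℝ} {w : ℝ → ℂ} {i j k : Fin n}

theorem shiftedPairing_eq_zero_of_lt (hT : ∀ t, T < t → w t = 0) {s : ℝ} (hs : T < s) :
    ρ.shiftedPairing w k j s = 0 := by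
  refine integral_eq_zero_of_ae ?_
  filter_upwards [ρ.ae_nonneg] with t ht
  simp only [hT (t + s) (by linarith), zero_mul, Pi.zero_apply]

theorem norm_shiftedPairing_le (hw : IsTestFunction T M w) {s : ℝ} (hs : 0 ≤ s) :
    ‖ρ.shiftedPairing w k j s‖ ≤ M * ∫ t in Icc 0 T, ‖ρ.dens t k j‖ ∂ρ.base :=
  ρ.norm_pairing_le (fun t _ => (hw.comp_add hs).norm_le t) (hw.comp_add hs).eq_zero_of_lt

theorem aestronglyMeasurable_shiftedPairing (hw : IsTestFunction T M w) :
    AEStronglyMeasurable (ρ.shiftedPairing w k j) μ.base := by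
  set h := (Icc 0 T).indicator (fun t => ρ.dens t k j)
  have hZ : StronglyMeasurable (fun s => ∫ t, w (t + s) * h t ∂ρ.base) :=
    stronglyMeasurable_integral_mul_of_integrable (F := fun s t => w (t + s))
      (hw.measurable.comp (measurable_snd.add measurable_fst)).stronglyMeasurable
      ((integrable_indicator_iff measurableSet_Icc).2 (ρ.locInt T k j))
      ((ρ.meas k j).indicator measurableSet_Icc).stronglyMeasurable
  refine hZ.aestronglyMeasurable.congr ?_
  filter_upwards [μ.ae_nonneg] with s hs
  refine integral_congr_ae ?_
  filter_upwards [ρ.ae_nonneg] with t ht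
  by_cases htT : t ≤ T
  · rw [show h t = ρ.dens t k j from indicator_of_mem (show t ∈ Icc 0 T from ⟨ht, htT⟩) _]
  · rw [hw.eq_zero_of_lt (t + s) (by linarith), zero_mul, zero_mul]

theorem integrable_shiftedPairing_mul_dens (hw : IsTestFunction T M w) :
    Integrable (fun s => ρ.shiftedPairing w k j s * μ.dens s i k) μ.base :=
  μ.integrable_mul_dens (aestronglyMeasurable_shiftedPairing μ ρ hw)
    (fun _ hs => ρ.norm_shiftedPairing_le hw hs)
    (fun _ hs => ρ.shiftedPairing_eq_zero_of_lt hw.eq_zero_of_lt hs)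

end Shift

section ResolventIdentity

variable (μ ρ : LocalMatrixMeasure n) (j : Fin n)

/-- The resolvent identity `ρ = μ + μ ∗ ρ`, tested against `w` in column `j`. -/
def ResolventIdentity (w : ℝ → ℂ) : Prop :=
  ∀ i, ρ.pairing w i j = μ.pairing w i j + ∑ k, μ.pairing (ρ.shiftedPairing w k j) i k

variable {μ ρ j} {T M : ℝ}

theorem resolventIdentity_indicator_one (hρ : IsResolvent μ ρ) {E : Set ℝ} (hE : MeasurableSet E)
    (hEb : Bornology.IsBounded E) : ResolventIdentity μ ρ j (E.indicator 1) := by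
  intro i
  have hconv : μ.conv ρ E i j = ∑ k, μ.pairing (ρ.shiftedPairing (E.indicator 1) k j) i k := by
    simp only [conv, Matrix.of_apply, μ.restrict_Ici]
    refine Finset.sum_congr rfl fun k _ => integral_congr_ae (ae_of_all _ fun s => ?_)
    have hs : ρ.val ((· + s) ⁻¹' E ∩ Ici 0) k j = ρ.val ((· + s) ⁻¹' E) k j := by
      simp only [val, Matrix.of_apply]
      rw [← Measure.restrict_restrict (hE.preimage (measurable_add_const s)), ρ.restrict_Ici]
    dsimp only
    rw [hs, mul_comm, ← ρ.pairing_indicator_one (hE.preimage (measurable_add_const s))]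
    rfl
  have hval := congrFun (congrFun (hρ E hE hEb).1 i) j
  rw [Matrix.sub_apply] at hval
  rw [ρ.pairing_indicator_one hE, μ.pairing_indicator_one hE, ← hconv]
  linear_combination hval

theorem ResolventIdentity.const_mul {w : ℝ → ℂ} (h : ResolventIdentity μ ρ j w) (c : ℂ) :
    ResolventIdentity μ ρ j (fun t => c * w t) := by
  intro i
  have hshift : ∀ k, ρ.shiftedPairing (fun t => c * w t) k j
      = fun s => c * ρ.shiftedPairing w k j s := fun k => funext fun s => ρ.pairing_const_mul c
  simp only [hshift, pairing_const_mul, h i, ← Finset.mul_sum, mul_add]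

theorem ResolventIdentity.add {w₁ w₂ : ℝ → ℂ} {M₁ M₂ : ℝ} (h₁ : ResolventIdentity μ ρ j w₁)
    (h₂ : ResolventIdentity μ ρ j w₂) (hw₁ : IsTestFunction T M₁ w₁)
    (hw₂ : IsTestFunction T M₂ w₂) : ResolventIdentity μ ρ j (w₁ + w₂) := by
  intro i
  have hshift : ∀ k, μ.pairing (ρ.shiftedPairing (w₁ + w₂) k j) i k
      = μ.pairing (ρ.shiftedPairing w₁ k j) i k + μ.pairing (ρ.shiftedPairing w₂ k j) i k := by
    intro k
    rw [← μ.pairing_add (integrable_shiftedPairing_mul_dens μ ρ hw₁)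
      (integrable_shiftedPairing_mul_dens μ ρ hw₂)]
    exact μ.pairing_congr_nonneg fun s hs => ρ.pairing_add
      ((hw₁.comp_add hs).integrable_mul_dens ρ) ((hw₂.comp_add hs).integrable_mul_dens ρ)
  rw [ρ.pairing_add (hw₁.integrable_mul_dens ρ) (hw₂.integrable_mul_dens ρ),
    μ.pairing_add (hw₁.integrable_mul_dens μ) (hw₂.integrable_mul_dens μ), h₁ i, h₂ i]
  simp only [hshift, Finset.sum_add_distrib]
  ring

theorem ResolventIdentity.of_tendsto {w : ℕ → ℝ → ℂ} {w₀ : ℝ → ℂ}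
    (h : ∀ m, ResolventIdentity μ ρ j (w m)) (hw : ∀ m, IsTestFunction T M (w m))
    (hlim : ∀ t, 0 ≤ t → Tendsto (w · t) atTop (𝓝 (w₀ t))) : ResolventIdentity μ ρ j w₀ := by
  intro i
  have hshift : ∀ k, Tendsto (fun m => μ.pairing (ρ.shiftedPairing (w m) k j) i k) atTop
      (𝓝 (μ.pairing (ρ.shiftedPairing w₀ k j) i k)) := fun k =>
    μ.tendsto_pairing (fun m => aestronglyMeasurable_shiftedPairing μ ρ (hw m))
      (fun m _ hs => ρ.norm_shiftedPairing_le (hw m) hs)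
      (fun m _ hs => ρ.shiftedPairing_eq_zero_of_lt (hw m).eq_zero_of_lt hs)
      (fun s hs => ρ.tendsto_pairing_of_isTestFunction (fun m => (hw m).comp_add hs)
        (fun t ht => hlim (t + s) (add_nonneg ht hs)))
  exact tendsto_nhds_unique ((ρ.tendsto_pairing_of_isTestFunction hw hlim).congr (h · i))
    ((μ.tendsto_pairing_of_isTestFunction hw hlim).add (tendsto_finsetSum _ fun k _ => hshift k))

theorem resolventIdentity_indicator_simpleFunc (hρ : IsResolvent μ ρ) (g : SimpleFunc ℝ ℂ) :
    ResolventIdentity μ ρ j ((Icc 0 T).indicator g) := by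
  induction g using SimpleFunc.induction with
  | @const c E hE =>
    have hind : (Icc 0 T).indicator (SimpleFunc.piecewise E hE (.const ℝ c) (.const ℝ 0))
        = fun t => c * (E ∩ Icc 0 T).indicator 1 t := by
      ext t
      by_cases htE : t ∈ E <;> by_cases htT : t ∈ Icc 0 T <;> simp [htE, htT]
    rw [hind]
    exact (resolventIdentity_indicator_one hρ (hE.inter measurableSet_Icc)
      ((Metric.isBounded_Icc 0 T).subset inter_subset_right)).const_mul c
  | @add f g _ hf hg =>
    obtain ⟨M₁, hM₁⟩ := f.exists_forall_norm_le
    obtain ⟨M₂, hM₂⟩ := g.exists_forall_norm_le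
    rw [SimpleFunc.coe_add, indicator_add']
    exact hf.add hg (.indicator_Icc f.measurable hM₁) (.indicator_Icc g.measurable hM₂)

theorem resolventIdentity_of_isTestFunction (hρ : IsResolvent μ ρ) {f : ℝ → ℂ}
    (hf : IsTestFunction T M f) : ResolventIdentity μ ρ j f := by
  let g := SimpleFunc.approxOn f hf.measurable univ 0 (mem_univ 0)
  have hg : ∀ m t, ‖g m t‖ ≤ 2 * M := fun m t => by
    linarith [SimpleFunc.norm_approxOn_zero_le hf.measurable (mem_univ 0) t m, hf.norm_le t]
  refine ResolventIdentity.of_tendsto (T := T)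
    (fun m => resolventIdentity_indicator_simpleFunc hρ (g m))
    (fun m => .indicator_Icc (g m).measurable (hg m)) fun t ht => ?_
  by_cases htT : t ≤ T
  · simp only [indicator_of_mem (show t ∈ Icc 0 T from ⟨ht, htT⟩)]
    exact SimpleFunc.tendsto_approxOn hf.measurable (mem_univ 0) (subset_closure (mem_univ _))
  · simp only [indicator_of_notMem (fun h : t ∈ Icc 0 T => htT h.2),
      hf.eq_zero_of_lt t (not_le.1 htT), tendsto_const_nhds]

end ResolventIdentity

noncomputable def expWeightedNorm (α : ℝ) (i j : Fin n) (t : ℝ) : ℝ :=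
  Real.exp (-α * t) * ‖σ.dens t i j‖

/-- `σ.weightedVariation α S i j = |σᵢⱼ|^α(S)`. -/
noncomputable def weightedVariation (α : ℝ) (S : Set ℝ) (i j : Fin n) : ℝ :=
  ∫ t in S, σ.expWeightedNorm α i j t ∂σ.base

section WeightedVariation

variable {α γ : ℝ} {i j : Fin n}

theorem measurable_expWeightedNorm : Measurable (σ.expWeightedNorm α i j) :=
  (Real.measurable_exp.comp (measurable_id.const_mul (-α))).mul (σ.meas i j).norm

theorem expWeightedNorm_nonneg (t : ℝ) : 0 ≤ σ.expWeightedNorm α i j t :=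
  mul_nonneg (Real.exp_pos _).le (norm_nonneg _)

theorem weightedVariation_nonneg (S : Set ℝ) : 0 ≤ σ.weightedVariation α S i j :=
  integral_nonneg σ.expWeightedNorm_nonneg

theorem expWeightedNorm_anti (hγα : γ ≤ α) {t : ℝ} (ht : 0 ≤ t) :
    σ.expWeightedNorm α i j t ≤ σ.expWeightedNorm γ i j t :=
  mul_le_mul_of_nonneg_right (Real.exp_le_exp.2 (by nlinarith)) (norm_nonneg _)

theorem integrable_expWeightedNorm_of_le (hγα : γ ≤ α)
    (hγ : Integrable (σ.expWeightedNorm γ i j) σ.base) :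
    Integrable (σ.expWeightedNorm α i j) σ.base := by
  refine hγ.mono' σ.measurable_expWeightedNorm.aestronglyMeasurable ?_
  filter_upwards [σ.ae_nonneg] with t ht
  rw [Real.norm_of_nonneg (σ.expWeightedNorm_nonneg t)]
  exact σ.expWeightedNorm_anti hγα ht

theorem weightedVariation_univ_le (hγα : γ ≤ α)
    (hγ : Integrable (σ.expWeightedNorm γ i j) σ.base) :
    σ.weightedVariation α univ i j ≤ σ.weightedVariation γ univ i j := by
  simp only [weightedVariation, Measure.restrict_univ]
  refine integral_mono_ae (σ.integrable_expWeightedNorm_of_le hγα hγ) hγ ?_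
  filter_upwards [σ.ae_nonneg] with t ht
  exact σ.expWeightedNorm_anti hγα ht

theorem integrableOn_expWeightedNorm_Icc (hα : 0 ≤ α) (T : ℝ) :
    IntegrableOn (σ.expWeightedNorm α i j) (Icc 0 T) σ.base := by
  refine (σ.locInt T i j).norm.mono' σ.measurable_expWeightedNorm.aestronglyMeasurable ?_
  filter_upwards [ae_restrict_mem measurableSet_Icc] with t ht
  rw [Real.norm_of_nonneg (σ.expWeightedNorm_nonneg t)]
  simpa only [expWeightedNorm, Real.exp_zero, neg_zero, zero_mul, one_mul] using
    σ.expWeightedNorm_anti (i := i) (j := j) hα ht.1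

theorem tendsto_weightedVariation_Ioi (hγ : Integrable (σ.expWeightedNorm γ i j) σ.base) :
    Tendsto (fun α => σ.weightedVariation α (Ioi 0) i j) atTop (𝓝 0) := by
  have hlim : Tendsto (fun α => σ.weightedVariation α (Ioi 0) i j) atTop
      (𝓝 (∫ _ in Ioi 0, (0 : ℝ) ∂σ.base)) := by
    refine tendsto_integral_filter_of_dominated_convergence _
      (.of_forall fun α => σ.measurable_expWeightedNorm.aestronglyMeasurable)
      ((eventually_ge_atTop γ).mono fun α hγα => ?_) hγ.restrict ?_
    · filter_upwards [ae_restrict_mem measurableSet_Ioi] with t ht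
      rw [Real.norm_of_nonneg (σ.expWeightedNorm_nonneg t)]
      exact σ.expWeightedNorm_anti hγα ht.le
    · filter_upwards [ae_restrict_mem measurableSet_Ioi] with t ht
      have hexp : Tendsto (fun α : ℝ => Real.exp (-α * t)) atTop (𝓝 0) :=
        (Real.tendsto_exp_neg_atTop_nhds_zero.comp (tendsto_id.atTop_mul_const ht)).congr
          fun α => by simp only [Function.comp_apply, id, neg_mul]
      simpa only [expWeightedNorm, zero_mul] using hexp.mul_const ‖σ.dens t i j‖
  simpa only [integral_zero] using hlim

theorem integrable_expWeightedNorm_of_forall_le {C : ℝ}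
    (hC : ∀ T, σ.weightedVariation α (Icc 0 T) i j ≤ C) (hα : 0 ≤ α) :
    Integrable (σ.expWeightedNorm α i j) σ.base := by
  have hcover : AECover σ.base atTop (fun T : ℝ => Icc 0 T) :=
    { ae_eventually_mem := by
        filter_upwards [σ.ae_nonneg] with t ht
        exact (eventually_ge_atTop t).mono fun T hT => ⟨ht, hT⟩
      measurableSet := fun _ => measurableSet_Icc }
  refine hcover.integrable_of_integral_norm_bounded C
    (σ.integrableOn_expWeightedNorm_Icc hα) (.of_forall fun T => ?_)
  simpa only [weightedVariation, Real.norm_of_nonneg (σ.expWeightedNorm_nonneg _)] using hC T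

theorem norm_pairing_le_weightedVariation {c : ℝ} {S : Set ℝ} {w : ℝ → ℂ}
    (hS : MeasurableSet S) (hint : IntegrableOn (σ.expWeightedNorm α i j) S σ.base)
    (hw : ∀ t, 0 ≤ t → ‖w t‖ ≤ S.indicator (fun t => c * Real.exp (-α * t)) t) :
    ‖σ.pairing w i j‖ ≤ c * σ.weightedVariation α S i j := by
  refine (norm_integral_le_of_norm_le ((integrable_indicator_iff hS).2 (hint.const_mul c))
    ?_).trans_eq (by rw [integral_indicator hS, integral_const_mul, weightedVariation])
  filter_upwards [σ.ae_nonneg] with t ht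
  calc ‖w t * σ.dens t i j‖ ≤ S.indicator (fun t => c * Real.exp (-α * t)) t * ‖σ.dens t i j‖ := by
        rw [norm_mul]
        exact mul_le_mul_of_nonneg_right (hw t ht) (norm_nonneg _)
    _ = S.indicator (fun t => c * σ.expWeightedNorm α i j t) t := by
        by_cases htS : t ∈ S <;> simp [htS, expWeightedNorm, mul_assoc]

theorem norm_shiftedPairing_le_weightedVariation {T s : ℝ} {w : ℝ → ℂ} (hα : 0 ≤ α)
    (hw : ∀ t, ‖w t‖ ≤ (Icc 0 T).indicator (fun t => Real.exp (-α * t)) t) (hs : 0 ≤ s) :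
    ‖σ.shiftedPairing w i j s‖ ≤ Real.exp (-α * s) * σ.weightedVariation α (Icc 0 T) i j := by
  refine σ.norm_pairing_le_weightedVariation measurableSet_Icc
    (σ.integrableOn_expWeightedNorm_Icc hα T) fun t ht => (hw (t + s)).trans ?_
  by_cases hts : t + s ∈ Icc 0 T
  · rw [indicator_of_mem hts, indicator_of_mem (show t ∈ Icc 0 T from ⟨ht, by linarith [hts.2]⟩),
      ← Real.exp_add]
    exact Real.exp_le_exp.2 (by linarith)
  · rw [indicator_of_notMem hts]
    exact indicator_nonneg (fun t _ => (mul_pos (Real.exp_pos _) (Real.exp_pos _)).le) t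

end WeightedVariation

noncomputable def normingTest (α T : ℝ) (i j : Fin n) : ℝ → ℂ :=
  (Icc 0 T).indicator fun t =>
    (Real.exp (-α * t) : ℂ) * (starRingEnd ℂ (σ.dens t i j) / ‖σ.dens t i j‖)

section NormingTest

variable {α T : ℝ} {i j : Fin n}

theorem norm_normingTest_le (t : ℝ) :
    ‖σ.normingTest α T i j t‖ ≤ (Icc 0 T).indicator (fun t => Real.exp (-α * t)) t := by
  by_cases ht : t ∈ Icc 0 T
  · simp only [normingTest, indicator_of_mem ht, norm_mul, Complex.norm_real,
      Real.norm_of_nonneg (Real.exp_pos _).le]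
    exact mul_le_of_le_one_right (Real.exp_pos _).le (Complex.norm_conj_div_norm_le_one _)
  · simp only [normingTest, indicator_of_notMem ht, norm_zero, le_refl]

theorem isTestFunction_normingTest (hα : 0 ≤ α) : IsTestFunction T 1 (σ.normingTest α T i j) where
  measurable := by
    have := σ.meas i j
    exact Measurable.indicator (by fun_prop) measurableSet_Icc
  norm_le t := by
    refine (σ.norm_normingTest_le t).trans ?_
    by_cases ht : t ∈ Icc 0 T
    · rw [indicator_of_mem ht, Real.exp_le_one_iff]
      nlinarith [ht.1]
    · rw [indicator_of_notMem ht]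
      exact zero_le_one
  eq_zero_of_lt t ht := indicator_of_notMem (fun h => (not_le.2 ht) h.2) _

theorem pairing_normingTest :
    σ.pairing (σ.normingTest α T i j) i j = σ.weightedVariation α (Icc 0 T) i j := by
  rw [weightedVariation, ← integral_indicator measurableSet_Icc, ← integral_complex_ofReal]
  refine integral_congr_ae (ae_of_all _ fun t => ?_)
  by_cases ht : t ∈ Icc 0 T
  · simp only [normingTest, expWeightedNorm, indicator_of_mem ht, mul_assoc,
      Complex.conj_div_norm_mul_self, Complex.ofReal_mul]
  · simp only [normingTest, indicator_of_notMem ht, zero_mul, Complex.ofReal_zero]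

end NormingTest

section Estimate

variable {μ ρ : LocalMatrixMeasure n}

theorem pairing_eq_add_atom_mulVec (hρ : IsResolvent μ ρ) {T M : ℝ} {w : ℝ → ℂ}
    (hw : IsTestFunction T M w) (j : Fin n) :
    (fun p => ρ.pairing w p j) = (fun p => μ.pairing w p j
      + ∑ k, μ.pairing ((Ioi 0).indicator (ρ.shiftedPairing w k j)) p k)
      + μ.val {0} *ᵥ fun p => ρ.pairing w p j := by
  ext p
  have hshift : ∀ k, ρ.shiftedPairing w k j 0 = ρ.pairing w k j := fun k => by
    simp only [shiftedPairing, add_zero]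
  simp only [resolventIdentity_of_isTestFunction hρ hw p,
    μ.pairing_eq_atom_add (integrable_shiftedPairing_mul_dens μ ρ hw), hshift,
    Finset.sum_add_distrib, Pi.add_apply, Matrix.mulVec, dotProduct]
  ring

theorem weightedVariation_Icc_le (hρ : IsResolvent μ ρ) (hdet : (1 - μ.val {0}).det ≠ 0)
    {α : ℝ} (hα : 0 ≤ α) (hμα : ∀ p k, Integrable (μ.expWeightedNorm α p k) μ.base)
    (T : ℝ) (i j : Fin n) :
    ρ.weightedVariation α (Icc 0 T) i j ≤ ∑ p, ‖(1 - μ.val {0})⁻¹ i p‖ *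
      (μ.weightedVariation α univ p j +
        ∑ k, μ.weightedVariation α (Ioi 0) p k * ρ.weightedVariation α (Icc 0 T) k j) := by
  set f := ρ.normingTest α T i j
  have hf : IsTestFunction T 1 f := ρ.isTestFunction_normingTest hα
  have hsol := congrFun (Matrix.eq_inv_mulVec_of_eq_add_mulVec (isUnit_iff_ne_zero.2 hdet)
    (pairing_eq_add_atom_mulVec hρ hf j)) i
  have hdirect : ∀ p, ‖μ.pairing f p j‖ ≤ μ.weightedVariation α univ p j := fun p => by
    simpa only [one_mul] using μ.norm_pairing_le_weightedVariation (c := 1) MeasurableSet.univ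
      (hμα p j).integrableOn fun t _ => by
        rw [indicator_univ, one_mul]
        exact (ρ.norm_normingTest_le t).trans
          (indicator_le_self' (fun _ _ => (Real.exp_pos _).le) t)
  have hconv : ∀ p k, ‖μ.pairing ((Ioi 0).indicator (ρ.shiftedPairing f k j)) p k‖
      ≤ μ.weightedVariation α (Ioi 0) p k * ρ.weightedVariation α (Icc 0 T) k j := fun p k => by
    rw [mul_comm]
    refine μ.norm_pairing_le_weightedVariation measurableSet_Ioi (hμα p k).integrableOn
      fun s hs => ?_
    by_cases hs' : s ∈ Ioi 0
    · simp only [indicator_of_mem hs', mul_comm _ (Real.exp _)]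
      exact ρ.norm_shiftedPairing_le_weightedVariation hα ρ.norm_normingTest_le hs
    · simp only [indicator_of_notMem hs', norm_zero, le_refl]
  calc ρ.weightedVariation α (Icc 0 T) i j = ‖ρ.pairing f i j‖ := by
        rw [pairing_normingTest, Complex.norm_real,
          Real.norm_of_nonneg (ρ.weightedVariation_nonneg _)]
    _ ≤ ∑ p, ‖(1 - μ.val {0})⁻¹ i p‖ * ‖μ.pairing f p j
          + ∑ k, μ.pairing ((Ioi 0).indicator (ρ.shiftedPairing f k j)) p k‖ := by
        rw [hsol, Matrix.mulVec, dotProduct]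
        exact (norm_sum_le _ _).trans_eq (Finset.sum_congr rfl fun p _ => norm_mul _ _)
    _ ≤ _ := by
        gcongr with p
        exact (norm_add_le _ _).trans (add_le_add (hdirect p)
          ((norm_sum_le _ _).trans (Finset.sum_le_sum fun k _ => hconv p k)))

end Estimate

end LocalMatrixMeasure

theorem resolvent_exponential_estimate_general {n : ℕ} (μ ρ : LocalMatrixMeasure n)
    (hdet : Matrix.det ((1 : Matrix (Fin n) (Fin n) ℂ) - μ.val {0}) ≠ 0)
    (hρ : LocalMatrixMeasure.IsResolvent μ ρ)
    (γ : ℝ)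
    (hμγ : ∀ i j, Integrable (fun t => Real.exp (-γ * t) * ‖μ.dens t i j‖) μ.base) :
    ∃ α : ℝ, γ ≤ α ∧
      ∀ i j, Integrable (fun t => Real.exp (-α * t) * ‖ρ.dens t i j‖) ρ.base := by
  set B := ((1 : Matrix (Fin n) (Fin n) ℂ) - μ.val {0})⁻¹
  have hsmall : Tendsto (fun α => ∑ i, ∑ p, ‖B i p‖ * ∑ k, μ.weightedVariation α (Ioi 0) p k)
      atTop (𝓝 0) := by
    simpa using tendsto_finsetSum _ fun i _ => tendsto_finsetSum _ fun p _ =>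
      (tendsto_finsetSum _ fun k _ => μ.tendsto_weightedVariation_Ioi (hμγ p k)).const_mul ‖B i p‖
  obtain ⟨α, hγα, hα, hε⟩ := ((eventually_ge_atTop γ).and ((eventually_ge_atTop 0).and
    (hsmall.eventually (eventually_le_nhds one_half_pos)))).exists
  have hμα p k := μ.integrable_expWeightedNorm_of_le hγα (hμγ p k)
  refine ⟨α, hγα, fun i j => ρ.integrable_expWeightedNorm_of_forall_le
    (C := 2 * ∑ l, ∑ p, ‖B l p‖ * μ.weightedVariation γ univ p j) (fun T => ?_) hα⟩
  calc ρ.weightedVariation α (Icc 0 T) i j ≤ ∑ k, ρ.weightedVariation α (Icc 0 T) k j :=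
        Finset.single_le_sum (f := fun k => ρ.weightedVariation α (Icc 0 T) k j)
          (fun k _ => ρ.weightedVariation_nonneg _) (Finset.mem_univ i)
    _ ≤ 2 * ∑ l, ∑ p, ‖B l p‖ * μ.weightedVariation α univ p j :=
        sum_le_two_mul_of_le_mul_add (fun _ _ => norm_nonneg _)
          (fun _ _ => μ.weightedVariation_nonneg _) (fun _ => ρ.weightedVariation_nonneg _)
          (fun l => LocalMatrixMeasure.weightedVariation_Icc_le hρ hdet hα hμα T l j) hε
    _ ≤ _ := by
        gcongr with l _ p _
        exact μ.weightedVariation_univ_le hγα (hμγ p j)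

/-- The exponential estimate in Theorem A.12 of Diekmann–Verduyn Lunel: if
`det[I − μ({0})] ≠ 0` and the exponentially weighted measure `μ^γ` (with density
`e^{−γs}` relative to `μ`) has finite total variation for some `γ > 0`, then there is
`α ≥ γ` such that `ρ^α` has finite total variation, where `ρ` is the resolvent of `μ`. -/
theorem resolvent_exponential_estimate {n : ℕ} (μ ρ : LocalMatrixMeasure n)
    (hdet : Matrix.det ((1 : Matrix (Fin n) (Fin n) ℂ) - μ.val {0}) ≠ 0)
    (hρ : LocalMatrixMeasure.IsResolvent μ ρ)
    (γ : ℝ) (hγ : 0 < γ)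
    (hμγ : ∀ i j, Integrable (fun t => Real.exp (-γ * t) * ‖μ.dens t i j‖) μ.base) :
    ∃ α : ℝ, γ ≤ α ∧
      ∀ i j, Integrable (fun t => Real.exp (-α * t) * ‖ρ.dens t i j‖) ρ.base :=
  resolvent_exponential_estimate_general μ ρ hdet hρ γ hμγ
end

section
/- Let (f_m) be a sequence of bounded Borel functions f_m : [-1,0] → ℝⁿ such that for every ℝⁿ-valued Borel vector measure μ on [-1,0] of bounded total variation, the sequence (∫_{[-1,0]} f_m · dμ) is Cauchy in ℝ. Then sup_m ‖f_m‖ < ∞, the pointwise limit f(x) = lim_m f_m(x) exists for every x ∈ [-1,0] and defines a bounded Borel function, and ∫ f_m · dμ → ∫ f · dμ for every such μ. In other words, the space of bounded Borel functions on [-1,0] equipped with the weak topology generated by the finite Borel vector measures is sequentially complete. -/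
open MeasureTheory Filter Topology RealInnerProductSpace

/-!
Pairing with point masses shows that every `⟪f m x, v⟫` is Cauchy, so in finite dimension
`f m x` converges for each `x ∈ [-1,0]`; the limit is Borel as a pointwise limit of Borel
functions, and dominated convergence gives the weak convergence once the `f m` are uniformly
bounded. For the uniform bound, suppose `‖f (m k) (x k)‖ > k` and take a finite measure `μ`
charging every `x k`. On `L¹(μ)` the functionals `u ↦ ∫ ⟪f m, u⟫ dμ` are pointwise bounded,
hence uniformly bounded by Banach–Steinhaus, and testing them on the atom at `x k` bounds
`‖f (m k) (x k)‖` independently of `k`.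
-/

section

variable {E : Type*} [NormedAddCommGroup E] [InnerProductSpace ℝ E]

theorem exists_tendsto_of_cauchySeq_inner [FiniteDimensional ℝ E] {a : ℕ → E}
    (ha : ∀ v, CauchySeq fun m => ⟪a m, v⟫) : ∃ L, Tendsto a atTop (𝓝 L) := by
  let b := stdOrthonormalBasis ℝ E
  have hcoord : ∀ i, ∃ l, Tendsto (fun m => ⟪b i, a m⟫) atTop (𝓝 l) := fun i =>
    cauchySeq_tendsto_of_complete (by simpa only [real_inner_comm] using ha (b i))
  choose l hl using hcoord
  refine ⟨∑ i, l i • b i, ?_⟩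
  have hsum : a = fun m => ∑ i, ⟪b i, a m⟫ • b i := funext fun m => (b.sum_repr' (a m)).symm
  rw [hsum]
  exact tendsto_finsetSum _ fun i _ => (hl i).smul_const (b i)

end

section

variable {α E : Type*} [MeasurableSpace α] [NormedAddCommGroup E] [InnerProductSpace ℝ E]
  {μ : Measure α}

theorem exists_bound_abs_integral_inner_of_cauchySeq [MeasurableSpace E] [BorelSpace E]
    [CompleteSpace E] {f : ℕ → α → E} (hf : ∀ m, MemLp (f m) ⊤ μ)
    (hc : ∀ u : α → E, Measurable u → Integrable u μ →
      CauchySeq fun m => ∫ x, ⟪f m x, u x⟫ ∂μ) :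
    ∃ C, 0 ≤ C ∧ ∀ m (u : α → E), Integrable u μ →
      |∫ x, ⟪f m x, u x⟫ ∂μ| ≤ C * ∫ x, ‖u x‖ ∂μ := by
  let T : ℕ → Lp E 1 μ →L[ℝ] ℝ := fun m => (innerSL ℝ).lpPairing μ ⊤ 1 ((hf m).toLp (f m))
  have hT : ∀ m (u : α → E) (hu : Integrable u μ),
      T m (hu.toL1 u) = ∫ x, ⟪f m x, u x⟫ ∂μ := by
    intro m u hu
    rw [ContinuousLinearMap.lpPairing_eq_integral]
    refine integral_congr_ae ?_
    filter_upwards [(hf m).coeFn_toLp, hu.coeFn_toL1] with x hfx hux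
    rw [← hfx, ← hux]
    rfl
  have hbdd : ∀ u, ∃ C, ∀ m, ‖T m u‖ ≤ C := by
    intro u
    have hu : Integrable u μ := L1.integrable_coeFn u
    have hTu : (fun m => T m u) = fun m => ∫ x, ⟪f m x, u x⟫ ∂μ := by
      funext m
      rw [← hT m u hu, hu.toL1_coeFn]
    obtain ⟨C, hC⟩ := isBounded_iff_forall_norm_le.1
      (hc u (Lp.stronglyMeasurable u).measurable hu).isBounded_range
    exact ⟨C, fun m => by rw [congrFun hTu m]; exact hC _ ⟨m, rfl⟩⟩
  obtain ⟨C, hC⟩ := banach_steinhaus hbdd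
  refine ⟨C, (norm_nonneg _).trans (hC 0), fun m u hu => ?_⟩
  calc |∫ x, ⟪f m x, u x⟫ ∂μ| = ‖T m (hu.toL1 u)‖ := by rw [hT, Real.norm_eq_abs]
    _ ≤ ‖T m‖ * ‖hu.toL1 u‖ := (T m).le_opNorm _
    _ ≤ C * ‖hu.toL1 u‖ := mul_le_mul_of_nonneg_right (hC m) (norm_nonneg _)
    _ = C * ∫ x, ‖u x‖ ∂μ := by rw [L1.norm_of_fun_eq_integral_norm]

theorem norm_le_of_abs_integral_inner_le [MeasurableSingletonClass α] [IsFiniteMeasure μ]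
    {f : α → E} {C : ℝ} (hC : 0 ≤ C)
    (h : ∀ u : α → E, Integrable u μ → |∫ y, ⟪f y, u y⟫ ∂μ| ≤ C * ∫ y, ‖u y‖ ∂μ)
    {x : α} (hx : μ {x} ≠ 0) : ‖f x‖ ≤ C := by
  set u : α → E := ({x} : Set α).indicator fun _ => f x
  have hpair : ∫ y, ⟪f y, u y⟫ ∂μ = μ.real {x} * ‖f x‖ ^ 2 := by
    have : (fun y => ⟪f y, u y⟫) = ({x} : Set α).indicator fun y => ⟪f y, f x⟫ := by
      funext y
      by_cases hy : y = x <;> simp [u, hy]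
    rw [this, integral_indicator (measurableSet_singleton x), integral_singleton,
      real_inner_self_eq_norm_sq, smul_eq_mul]
  have hnorm : ∫ y, ‖u y‖ ∂μ = μ.real {x} * ‖f x‖ := by
    rw [show (fun y => ‖u y‖) = ({x} : Set α).indicator fun _ => ‖f x‖ from
        funext fun y => norm_indicator_eq_indicator_norm _ y,
      integral_indicator (measurableSet_singleton x), integral_singleton, smul_eq_mul]
  have hmass : 0 < μ.real {x} := ENNReal.toReal_pos hx (measure_ne_top μ _)
  have hineq := h u ((integrable_const (f x)).indicator (measurableSet_singleton x))
  rw [hpair, hnorm, abs_of_nonneg (by positivity)] at hineq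
  rcases (norm_nonneg (f x)).eq_or_lt with h0 | hpos
  · rw [← h0]; exact hC
  · nlinarith [mul_pos hmass hpos]

theorem exists_isFiniteMeasure_forall_measure_singleton_ne_zero {s : Set α}
    (hs : MeasurableSet s) {x : ℕ → α} (hx : ∀ k, x k ∈ s) :
    ∃ μ : Measure α, IsFiniteMeasure μ ∧ μ sᶜ = 0 ∧ ∀ k, μ {x k} ≠ 0 := by
  let p : unitInterval := ⟨1 / 2, by norm_num, by norm_num⟩
  have hp0 : p ≠ 0 := fun h => by norm_num [p, Subtype.ext_iff] at h
  have hp1 : p ≠ 1 := fun h => by norm_num [p, Subtype.ext_iff] at h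
  have hxm : Measurable x := measurable_from_nat
  refine ⟨(ProbabilityTheory.geometricMeasure p).map x, inferInstance, ?_, fun k => ?_⟩
  · rw [Measure.map_apply hxm hs.compl, Set.preimage_compl,
      Set.preimage_eq_univ_iff.2 (Set.range_subset_iff.2 hx), Set.compl_univ, measure_empty]
  · refine (lt_of_lt_of_le ?_ (Measure.le_map_apply hxm.aemeasurable {x k})).ne'
    refine lt_of_lt_of_le ?_ (measure_mono (Set.singleton_subset_iff.2 (Set.mem_preimage.2 rfl)))
    rw [ProbabilityTheory.geometricMeasure_singleton hp0, ENNReal.ofReal_pos]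
    exact ProbabilityTheory.geometricMeasure_pos hp0 hp1 k

def IsWeakCauchySeqOn [MeasurableSpace E] (s : Set α) (f : ℕ → α → E) : Prop :=
  ∀ μ : Measure α, IsFiniteMeasure μ → μ sᶜ = 0 →
    ∀ u : α → E, Measurable u → Integrable u μ → CauchySeq fun m => ∫ x, ⟪f m x, u x⟫ ∂μ

theorem IsWeakCauchySeqOn.exists_forall_norm_le [MeasurableSingletonClass α] [MeasurableSpace E]
    [BorelSpace E] [SecondCountableTopology E] [CompleteSpace E] {s : Set α} {f : ℕ → α → E}
    (hf : IsWeakCauchySeqOn s f) (hs : MeasurableSet s) (hfm : ∀ m, Measurable (f m))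
    (hfb : ∀ m, ∃ C, ∀ x ∈ s, ‖f m x‖ ≤ C) :
    ∃ C, ∀ m, ∀ x ∈ s, ‖f m x‖ ≤ C := by
  by_contra! hunbdd
  choose m x hxs hlarge using fun k : ℕ => hunbdd k
  obtain ⟨μ, hμ, hμs, hatom⟩ := exists_isFiniteMeasure_forall_measure_singleton_ne_zero hs hxs
  have hae : ∀ᵐ y ∂μ, y ∈ s := mem_ae_iff.2 hμs
  have hmemLp : ∀ m, MemLp (f m) ⊤ μ := fun m =>
    let ⟨C, hC⟩ := hfb m
    memLp_top_of_bound (hfm m).aestronglyMeasurable C (hae.mono fun y hy => hC y hy)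
  obtain ⟨C, hC0, hC⟩ := exists_bound_abs_integral_inner_of_cauchySeq hmemLp (hf μ hμ hμs)
  obtain ⟨k, hk⟩ := exists_nat_ge C
  exact (hlarge k).not_ge ((norm_le_of_abs_integral_inner_le hC0 (hC (m k)) (hatom k)).trans hk)

theorem IsWeakCauchySeqOn.exists_tendsto [MeasurableSingletonClass α] [FiniteDimensional ℝ E]
    [MeasurableSpace E] {s : Set α} {f : ℕ → α → E} (hf : IsWeakCauchySeqOn s f) (hs : MeasurableSet s)
    {x : α} (hx : x ∈ s) : ∃ L, Tendsto (fun m => f m x) atTop (𝓝 L) := by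
  have hdirac : Measure.dirac x sᶜ = 0 := by
    rw [Measure.dirac_apply' _ hs.compl, Set.indicator_of_notMem (Set.notMem_compl_iff.2 hx)]
  refine exists_tendsto_of_cauchySeq_inner fun v => ?_
  simpa using hf _ inferInstance hdirac (fun _ => v) measurable_const (integrable_const v)

theorem measurable_indicator_of_tendsto {β : Type*} [TopologicalSpace β]
    [TopologicalSpace.PseudoMetrizableSpace β] [MeasurableSpace β] [BorelSpace β] [Zero β]
    {f : ℕ → α → β} {g : α → β} {s : Set α} (hf : ∀ m, Measurable (f m)) (hs : MeasurableSet s)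
    (hlim : ∀ x ∈ s, Tendsto (fun m => f m x) atTop (𝓝 (g x))) :
    Measurable (s.indicator g) := by
  refine measurable_of_tendsto_metrizable (fun m => (hf m).indicator hs) (tendsto_pi_nhds.2 ?_)
  intro x
  by_cases hx : x ∈ s
  · simpa only [Set.indicator_of_mem hx] using hlim x hx
  · simpa only [Set.indicator_of_notMem hx] using tendsto_const_nhds

theorem tendsto_integral_inner_of_tendsto {f : ℕ → α → E} {g u : α → E} {C : ℝ}
    (hf : ∀ m, AEStronglyMeasurable (f m) μ) (hbound : ∀ m, ∀ᵐ x ∂μ, ‖f m x‖ ≤ C)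
    (hlim : ∀ᵐ x ∂μ, Tendsto (fun m => f m x) atTop (𝓝 (g x))) (hu : Integrable u μ) :
    Tendsto (fun m => ∫ x, ⟪f m x, u x⟫ ∂μ) atTop (𝓝 (∫ x, ⟪g x, u x⟫ ∂μ)) := by
  refine tendsto_integral_of_dominated_convergence (fun x => C * ‖u x‖)
    (fun m => (hf m).inner hu.aestronglyMeasurable) (hu.norm.const_mul C) (fun m => ?_)
    (hlim.mono fun x hx => hx.inner tendsto_const_nhds)
  filter_upwards [hbound m] with x hx
  exact (norm_inner_le_norm _ _).trans (mul_le_mul_of_nonneg_right hx (norm_nonneg _))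

end

/-- Part II of the proof of Theorem B.1 of Diekmann–Verduyn Lunel: the space of
bounded Borel functions on `[-1,0]` with the weak topology generated by the finite
Borel vector measures is sequentially complete.  If `(f_m)` is a sequence of bounded
Borel functions such that `(∫ f_m · dμ)` is Cauchy for every `ℝⁿ`-valued Borel vector
measure `μ` of bounded total variation (represented by a finite base measure with an
integrable density), then `(f_m)` is uniformly bounded, converges pointwise on
`[-1,0]` to a bounded Borel function `g`, and `∫ f_m · dμ → ∫ g · dμ` for every such
`μ`. -/
theorem b_weak_sequentially_complete {n : ℕ}
    (f : ℕ → ℝ → EuclideanSpace ℝ (Fin n))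
    (hfm : ∀ m, Measurable (f m))
    (hfb : ∀ m, ∃ C : ℝ, ∀ x ∈ Set.Icc (-1:ℝ) 0, ‖f m x‖ ≤ C)
    (hcauchy : ∀ (base : Measure ℝ), IsFiniteMeasure base →
      base ((Set.Icc (-1:ℝ) 0)ᶜ) = 0 →
      ∀ dens : ℝ → EuclideanSpace ℝ (Fin n), Measurable dens → Integrable dens base →
      CauchySeq (fun m => ∫ x, ⟪f m x, dens x⟫ ∂base)) :
    (∃ C : ℝ, ∀ m, ∀ x ∈ Set.Icc (-1:ℝ) 0, ‖f m x‖ ≤ C)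
    ∧ ∃ g : ℝ → EuclideanSpace ℝ (Fin n), Measurable g ∧
        (∃ C : ℝ, ∀ x ∈ Set.Icc (-1:ℝ) 0, ‖g x‖ ≤ C) ∧
        (∀ x ∈ Set.Icc (-1:ℝ) 0, Tendsto (fun m => f m x) atTop (𝓝 (g x))) ∧
        (∀ (base : Measure ℝ), IsFiniteMeasure base →
          base ((Set.Icc (-1:ℝ) 0)ᶜ) = 0 →
          ∀ dens : ℝ → EuclideanSpace ℝ (Fin n), Measurable dens → Integrable dens base →
          Tendsto (fun m => ∫ x, ⟪f m x, dens x⟫ ∂base) atTop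
            (𝓝 (∫ x, ⟪g x, dens x⟫ ∂base))) := by
  have hweak : IsWeakCauchySeqOn (Set.Icc (-1:ℝ) 0) f := hcauchy
  obtain ⟨C, hC⟩ := hweak.exists_forall_norm_le measurableSet_Icc hfm hfb
  have hconv : ∀ x ∈ Set.Icc (-1:ℝ) 0,
      Tendsto (fun m => f m x) atTop (𝓝 (limUnder atTop fun m => f m x)) := fun x hx =>
    tendsto_nhds_limUnder (hweak.exists_tendsto measurableSet_Icc hx)
  set g := (Set.Icc (-1:ℝ) 0).indicator fun x => limUnder atTop fun m => f m x
  have hlim : ∀ x ∈ Set.Icc (-1:ℝ) 0, Tendsto (fun m => f m x) atTop (𝓝 (g x)) := fun x hx => by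
    simpa only [g, Set.indicator_of_mem hx] using hconv x hx
  refine ⟨⟨C, hC⟩, g, measurable_indicator_of_tendsto hfm measurableSet_Icc hconv,
    ⟨C, fun x hx => le_of_tendsto' (hlim x hx).norm fun m => hC m x hx⟩, hlim, ?_⟩
  intro base _ hbase dens _ hdens
  have hae : ∀ᵐ x ∂base, x ∈ Set.Icc (-1:ℝ) 0 := mem_ae_iff.2 hbase
  exact tendsto_integral_inner_of_tendsto (fun m => (hfm m).aestronglyMeasurable)
    (fun m => hae.mono (hC m)) (hae.mono hlim) hdens
end
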